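/- arXiv:2504.12002 — 6 statements merged into one kernel-verified Lean document; each statement's English description precedes it below -/
import Mathlib

section
/- If a group G has a characteristic subgroup N and the quotient G/N has property R_∞, then G has property R_∞. -/
/-- If `N` is a characteristic subgroup of `G` and `G/N` has property `R_∞`,
then `G` has property `R_∞`. -/
theorem quotient_Rinfty_implies_Rinfty {G : Type*} [Group G] (N : Subgroup G)
    [N.Characteristic]
    (hquot : ∀ ψ : (G ⧸ N) ≃* (G ⧸ N),
      Infinite (Quot (fun a b : G ⧸ N => ∃ w, ψ w * a * w⁻¹ = b))) :
    ∀ φ : G ≃* G, Infinite (Quot (fun a b : G => ∃ w, φ w * a * w⁻¹ = b)) := by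
  intro φ
  have hmap : N.map φ.toMonoidHom = N := by
    exact Subgroup.characteristic_iff_map_eq.mp ‹N.Characteristic› φ
  let ψ : (G ⧸ N) ≃* (G ⧸ N) := QuotientGroup.congr N N φ hmap
  have hψ : ∀ g : G, ψ (QuotientGroup.mk g) = QuotientGroup.mk (φ g) := fun g => rfl
  have := hquot ψ
  refine Infinite.of_surjective
    (Quot.map (QuotientGroup.mk : G → G ⧸ N) ?_ :
      Quot (fun a b : G => ∃ w, φ w * a * w⁻¹ = b) →
        Quot (fun a b : G ⧸ N => ∃ w, ψ w * a * w⁻¹ = b)) ?_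
  · rintro a b ⟨w, hw⟩
    exact ⟨QuotientGroup.mk w, by rw [hψ, ← hw]; rfl⟩
  · rintro ⟨x⟩
    obtain ⟨g, rfl⟩ := QuotientGroup.mk_surjective x
    exact ⟨Quot.mk _ g, rfl⟩
end

section
/- The infinite dihedral group D_∞ has property R_∞: for every automorphism φ of D_∞, there are infinitely many φ-twisted conjugacy classes. -/
/-!
Every automorphism of `D_∞ = DihedralGroup 0` has the form `r i ↦ r (u i)`, `sr i ↦ sr (k + u i)`
with `u = ±1`, since rotations of infinite order cannot go to reflections. Composing `φ` with an
inner automorphism only translates the twisted classes, so conjugating by `sr 0` reduces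
`u = -1` to `u = 1`. There the twisted class of `r i` is `{r i, r (-k - i)}`, so `(2 i + k)²` is a twisted
class invariant, and it takes infinitely many values.
-/

open DihedralGroup

def TwistedConj {G : Type*} [Group G] (φ : G →* G) (a b : G) : Prop :=
  ∃ w, φ w * a * w⁻¹ = b

theorem Quot.infinite_of_infinite_range {α β : Type*} {r : α → α → Prop} (f : α → β)
    (hf : ∀ a b, r a b → f a = f b) (h : (Set.range f).Infinite) : Infinite (Quot r) := by
  by_contra hfin
  rw [not_infinite_iff_finite] at hfin
  exact h (Set.range_quot_lift hf ▸ Set.finite_range (Quot.lift f hf))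

def twistedConjQuotEquiv {G : Type*} [Group G] (g : G) {φ ψ : G →* G}
    (h : ∀ w, ψ w = g * φ w * g⁻¹) : Quot (TwistedConj φ) ≃ Quot (TwistedConj ψ) :=
  Quot.congr (Equiv.mulLeft g) fun a b => exists_congr fun w => by
    rw [h, Equiv.coe_mulLeft, ← mul_left_cancel_iff (a := g)]
    group

namespace DihedralGroup

section Automorphisms

variable {n : ℕ}

theorem exists_mulEquiv_apply_r_one (φ : DihedralGroup n ≃* DihedralGroup n) (hn : n ≠ 2) :
    ∃ j, φ (r 1) = r j := by
  rcases h : φ (r 1) with j | j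
  · exact ⟨j, rfl⟩
  · have := φ.orderOf_eq (r 1)
    rw [h, orderOf_sr, orderOf_r_one] at this
    exact absurd this.symm hn

theorem exists_mulEquiv_apply_r (φ : DihedralGroup n ≃* DihedralGroup n) (hn : n ≠ 2) :
    ∃ j, ∀ i, φ (r i) = r (j * i) := by
  obtain ⟨j, hj⟩ := exists_mulEquiv_apply_r_one φ hn
  refine ⟨j, fun i => ?_⟩
  obtain ⟨i, rfl⟩ := ZMod.intCast_surjective i
  rw [← r_one_zpow, map_zpow, hj, r_zpow]

theorem exists_mulEquiv_apply_sr_zero (φ : DihedralGroup n ≃* DihedralGroup n) (hn : n ≠ 2) :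
    ∃ k, φ (sr 0) = sr k := by
  rcases h : φ (sr 0) with j | k
  · obtain ⟨j', hj'⟩ := exists_mulEquiv_apply_r φ.symm hn
    have := hj' j
    rw [← h, φ.symm_apply_apply] at this
    cases this
  · exact ⟨k, rfl⟩

theorem exists_mulEquiv_apply_eq (φ : DihedralGroup n ≃* DihedralGroup n) (hn : n ≠ 2) :
    ∃ u k : ZMod n, IsUnit u ∧ (∀ i, φ (r i) = r (u * i)) ∧ ∀ i, φ (sr i) = sr (k + u * i) := by
  obtain ⟨u, hu⟩ := exists_mulEquiv_apply_r φ hn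
  obtain ⟨v, hv⟩ := exists_mulEquiv_apply_r φ.symm hn
  obtain ⟨k, hk⟩ := exists_mulEquiv_apply_sr_zero φ hn
  have huv : u * v = 1 := by
    have := hu v
    rw [← mul_one v, ← hv, φ.apply_symm_apply, mul_one] at this
    exact (r.inj this).symm
  refine ⟨u, k, .of_mul_eq_one v huv, hu, fun i => ?_⟩
  rw [← zero_add i, ← sr_mul_r, map_mul, hk, hu, sr_mul_r, zero_add]

end Automorphisms

/-- For `φ : r i ↦ r i, sr i ↦ sr (k + i)` the `φ`-twisted class of `r i` is
`{r i, r (-k - i)}`, on which `2 i + k` is determined up to sign. -/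
def twistedInvariant (k : ZMod 0) : DihedralGroup 0 → ZMod 0
  | r i => (2 * i + k) ^ 2
  | sr _ => 0

theorem twistedInvariant_eq_of_twistedConj {φ : DihedralGroup 0 →* DihedralGroup 0} {k : ZMod 0}
    (hr : ∀ i, φ (r i) = r i) (hsr : ∀ i, φ (sr i) = sr (k + i)) {a b : DihedralGroup 0}
    (hab : TwistedConj φ a b) : twistedInvariant k a = twistedInvariant k b := by
  obtain ⟨w, rfl⟩ := hab
  rcases a with i | i <;> rcases w with j | j <;>
    simp only [hr, hsr, inv_r, inv_sr, r_mul_r, r_mul_sr, sr_mul_r, sr_mul_sr, twistedInvariant] <;>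
    ring

theorem infinite_range_twistedInvariant (k : ZMod 0) :
    (Set.range (twistedInvariant k)).Infinite := by
  obtain ⟨k, rfl⟩ := ZMod.intCast_surjective k
  refine Set.infinite_of_injective_forall_mem
    (f := fun m : ℕ => twistedInvariant k (r (Int.cast (m + k.natAbs))))
    (fun m m' h => ?_) fun m => Set.mem_range_self _
  have h' : (2 * (m + k.natAbs) + k) ^ 2 = (2 * (m' + k.natAbs) + k) ^ 2 :=
    Int.cast_injective (α := ZMod 0) (by push_cast at h ⊢; exact h)
  rw [sq_eq_sq₀ (by omega) (by omega)] at h'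
  omega

theorem infinite_quot_twistedConj_of_apply_r_eq {φ : DihedralGroup 0 →* DihedralGroup 0}
    {k : ZMod 0} (hr : ∀ i, φ (r i) = r i) (hsr : ∀ i, φ (sr i) = sr (k + i)) :
    Infinite (Quot (TwistedConj φ)) :=
  Quot.infinite_of_infinite_range _ (fun _ _ => twistedInvariant_eq_of_twistedConj hr hsr)
    (infinite_range_twistedInvariant k)

theorem infinite_quot_twistedConj_of_apply_r_eq_neg {φ : DihedralGroup 0 →* DihedralGroup 0}
    {k : ZMod 0} (hr : ∀ i, φ (r i) = r (-i)) (hsr : ∀ i, φ (sr i) = sr (k - i)) :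
    Infinite (Quot (TwistedConj φ)) := by
  let ψ := (MulAut.conj (sr 0)).toMonoidHom.comp φ
  rw [(twistedConjQuotEquiv (sr 0) (ψ := ψ) fun _ => rfl).infinite_iff]
  refine infinite_quot_twistedConj_of_apply_r_eq (k := -k) (fun i => ?_) (fun i => ?_) <;>
    simp only [ψ, MonoidHom.comp_apply, MulEquiv.coe_toMonoidHom, MulAut.conj_apply, hr, hsr,
      inv_sr, sr_mul_r, r_mul_sr, sr_mul_sr] <;>
    ring_nf

end DihedralGroup

/-- The infinite dihedral group (realized as `DihedralGroup 0`) has property `R_∞`: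
for every automorphism `φ` there are infinitely many `φ`-twisted conjugacy classes. -/
theorem infinite_dihedral_Rinfty :
    ∀ φ : DihedralGroup 0 ≃* DihedralGroup 0,
      Infinite (Quot (fun a b : DihedralGroup 0 => ∃ w, φ w * a * w⁻¹ = b)) := by
  intro φ
  obtain ⟨u, k, hu, hr, hsr⟩ := exists_mulEquiv_apply_eq φ (by norm_num)
  change Infinite (Quot (TwistedConj φ.toMonoidHom))
  rcases Int.isUnit_iff.mp hu with rfl | rfl
  · exact infinite_quot_twistedConj_of_apply_r_eq (k := k)
      (fun i => (hr i).trans (congrArg r (one_mul i)))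
      (fun i => (hsr i).trans (congrArg (fun x => sr (k + x)) (one_mul i)))
  · exact infinite_quot_twistedConj_of_apply_r_eq_neg (k := k)
      (fun i => (hr i).trans (congrArg r (neg_one_mul i)))
      (fun i => (hsr i).trans (congrArg (fun x => sr (k + x)) (neg_one_mul i)))
end

section
/- In D_∞, for the automorphism φ given by φ(t) = t⁻¹ and φ(x) = xt, the elements tⁿx and tᵐx are φ-twisted conjugate if and only if m = n or m = −n−1; hence there are infinitely many φ-twisted conjugacy classes. -/
/-!
With `t = r 1` and `x = sr 0`, the element `tⁿx` is the reflection `sr (-n)`. Twisting a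
reflection `sr i` by a rotation fixes it, twisting it by a reflection gives `sr (1 - i)`, so the
twisted class of `sr i` is `{sr i, sr (1 - i)}`. Since twisted conjugacy is an equivalence
relation, the classes of `tᵏx` for `k ∈ ℕ` are pairwise distinct.
-/

open DihedralGroup

def IsTwistedConj {G : Type*} [Group G] (φ : G →* G) (a b : G) : Prop :=
  ∃ w, φ w * a * w⁻¹ = b

theorem isTwistedConj_equivalence {G : Type*} [Group G] (φ : G →* G) :
    Equivalence (IsTwistedConj φ) where
  refl a := ⟨1, by simp⟩
  symm := by
    rintro a b ⟨w, rfl⟩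
    exact ⟨w⁻¹, by simp [mul_assoc]⟩
  trans := by
    rintro a b c ⟨v, rfl⟩ ⟨w, rfl⟩
    exact ⟨w * v, by simp [mul_assoc]⟩

namespace DihedralGroup

variable {n : ℕ}

/-- `φ(t) = t⁻¹`, `φ(x) = x t` for `t = r 1`, `x = sr 0`. -/
def twistAut (n : ℕ) : DihedralGroup n ≃* DihedralGroup n where
  toFun
    | r i => r (-i)
    | sr i => sr (1 - i)
  invFun
    | r i => r (-i)
    | sr i => sr (1 - i)
  left_inv := by rintro (i | i) <;> simp
  right_inv := by rintro (i | i) <;> simp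
  map_mul' := by
    rintro (a | a) (b | b) <;> simp only [r_mul_r, r_mul_sr, sr_mul_r, sr_mul_sr] <;>
      congr 1 <;> ring

@[simp]
theorem twistAut_r (i : ZMod n) : twistAut n (r i) = r (-i) := rfl

@[simp]
theorem twistAut_sr (i : ZMod n) : twistAut n (sr i) = sr (1 - i) := rfl

theorem isTwistedConj_sr_sr_iff (i j : ZMod n) :
    IsTwistedConj (twistAut n).toMonoidHom (sr i) (sr j) ↔ j = i ∨ j = 1 - i := by
  constructor
  · rintro ⟨w | w, hw⟩ <;>
      simp only [MulEquiv.coe_toMonoidHom, twistAut_r, twistAut_sr, inv_r, inv_sr, r_mul_sr,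
        sr_mul_r, sr_mul_sr, sr.injEq] at hw <;> rw [← hw]
    · left; ring
    · right; ring
  · rintro (rfl | rfl)
    · exact (isTwistedConj_equivalence _).refl _
    · exact ⟨sr 0, by simp [sr_mul_sr, r_mul_sr]⟩

end DihedralGroup

/-- In `D_∞ = ⟨x, t | x² = 1, x⁻¹tx = t⁻¹⟩` (realized as `DihedralGroup 0` with
`t = r 1`, `x = sr 0`), for the automorphism `φ` with `φ(t) = t⁻¹` and `φ(x) = x·t`,
the elements `tⁿx` and `tᵐx` are `φ`-twisted conjugate iff `m = n` or `m = -n-1`;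
hence there are infinitely many `φ`-twisted conjugacy classes. -/
theorem infinite_dihedral_twisted_classes :
    ∃ φ : DihedralGroup 0 ≃* DihedralGroup 0,
      φ (r 1) = (r 1)⁻¹ ∧ φ (sr 0) = sr 0 * r 1 ∧
      (∀ m n : ℤ,
        (∃ w, φ w * ((r 1) ^ n * sr 0) * w⁻¹ = (r 1) ^ m * sr 0) ↔ (m = n ∨ m = -n - 1)) ∧
      Infinite (Quot (fun a b : DihedralGroup 0 => ∃ w, φ w * a * w⁻¹ = b)) := by
  have classes (m n : ℤ) : IsTwistedConj (twistAut 0).toMonoidHom ((r 1) ^ n * sr 0)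
      ((r 1) ^ m * sr 0) ↔ m = n ∨ m = -n - 1 := by
    simp only [r_one_zpow, r_mul_sr, zero_sub, isTwistedConj_sr_sr_iff]
    norm_cast
    omega
  refine ⟨twistAut 0, rfl, rfl, classes, Infinite.of_injective
    (fun k : ℕ => Quot.mk _ ((r 1) ^ (k : ℤ) * sr 0)) fun a b hab => ?_⟩
  have hab' := (isTwistedConj_equivalence _).eqvGen_iff.mp
    (Quot.eq (r := IsTwistedConj (twistAut 0).toMonoidHom) |>.mp hab)
  rw [classes] at hab'
  omega
end

section
/- If a group G admits a non-zero φ-invariant homogeneous quasimorphism f for an automorphism φ of G, then G has property R_∞(φ): there are infinitely many φ-twisted conjugacy classes. Moreover there exists x ∈ G whose powers xⁱ, i ∈ ℤ, lie in pairwise distinct φ-twisted conjugacy classes. -/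
/-- If `G` admits a non-zero `φ`-invariant homogeneous quasimorphism, then `G` has
property `R_∞(φ)`: the `φ`-twisted conjugacy relation has infinitely many classes,
and moreover some `x ∈ G` has all its powers `xⁱ` in pairwise distinct
`φ`-twisted conjugacy classes. -/
theorem Rinfty_of_invariant_quasimorphism {G : Type*} [Group G] (φ : G ≃* G)
    (f : G → ℝ) (hD : ∃ D : ℝ, ∀ x y : G, |f (x * y) - f x - f y| ≤ D)
    (hhom : ∀ (x : G) (n : ℤ), f (x ^ n) = n * f x)
    (hinv : ∀ x : G, f (φ x) = f x) (hne : ∃ x : G, f x ≠ 0) :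
    Infinite (Quot (fun a b : G => ∃ w, φ w * a * w⁻¹ = b)) ∧
    ∃ x : G, ∀ i j : ℤ, i ≠ j → ¬ (∃ w, φ w * x ^ i * w⁻¹ = x ^ j) := by
  set r : G → G → Prop := fun a b => ∃ w, φ w * a * w⁻¹ = b with hr
  obtain ⟨D, hD⟩ := hD
  obtain ⟨x₀, hx₀⟩ := hne
  have hinvf : ∀ x : G, f x⁻¹ = - f x := by
    intro x
    have := hhom x (-1)
    simpa using this
  -- key bound: f varies by at most 2D on twisted conjugacy classes
  have key : ∀ a b : G, r a b → |f b - f a| ≤ 2 * D := by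
    rintro a b ⟨w, rfl⟩
    have h1 := hD (φ w * a) w⁻¹
    have h2 := hD (φ w) a
    have h3 : f (φ w) = f w := hinv w
    have h4 : f (w⁻¹) = - f w := hinvf w
    have heq : f (φ w * a * w⁻¹) - f a =
        (f (φ w * a * w⁻¹) - f (φ w * a) - f w⁻¹) +
        (f (φ w * a) - f (φ w) - f a) := by
      rw [h3, h4]; ring
    rw [heq]
    calc |_ + _| ≤ _ + _ := abs_add_le _ _
      _ ≤ 2 * D := by linarith [abs_le.mp h1, abs_le.mp h2]
  have hc : 0 < |f x₀| := abs_pos.mpr hx₀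
  obtain ⟨n, hn⟩ := exists_nat_gt (2 * D / |f x₀|)
  have hn' : 2 * D < n * |f x₀| := by
    rw [div_lt_iff₀ hc] at hn; linarith
  set x : G := x₀ ^ (n : ℤ) with hx
  have hpow : ∀ i : ℤ, f (x ^ i) = ((n : ℤ) * i : ℤ) * f x₀ := by
    intro i
    rw [hx, ← zpow_mul]
    exact hhom x₀ ((n : ℤ) * i)
  have main : ∀ i j : ℤ, i ≠ j → ¬ r (x ^ i) (x ^ j) := by
    intro i j hij hrel
    have hb := key _ _ hrel
    rw [hpow i, hpow j] at hb
    have habs : |((n : ℤ) * j : ℤ) * f x₀ - ((n : ℤ) * i : ℤ) * f x₀|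
        = (n : ℝ) * |(j - i : ℝ)| * |f x₀| := by
      rw [show (((n : ℤ) * j : ℤ) : ℝ) * f x₀ - (((n : ℤ) * i : ℤ) : ℝ) * f x₀
          = ((n : ℝ) * (j - i)) * f x₀ by push_cast; ring]
      rw [abs_mul, abs_mul, abs_of_nonneg (by positivity : (0:ℝ) ≤ (n:ℝ))]
    rw [habs] at hb
    have h1 : (1 : ℝ) ≤ |(j : ℝ) - (i : ℝ)| := by
      have h' : (1 : ℤ) ≤ |j - i| := Int.one_le_abs (sub_ne_zero.mpr (Ne.symm hij))
      have h'' : ((1:ℤ):ℝ) ≤ ((|j - i| : ℤ) : ℝ) := by exact_mod_cast h'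
      rw [Int.cast_abs] at h''
      push_cast at h''
      simpa using h''
    have hn0 : (0 : ℝ) ≤ (n : ℝ) := by positivity
    have : (n : ℝ) * |f x₀| ≤ (n : ℝ) * |(j : ℝ) - (i : ℝ)| * |f x₀| := by
      nlinarith [mul_nonneg (mul_nonneg hn0 (sub_nonneg.mpr h1)) hc.le]
    linarith
  -- the relation is an equivalence
  have hequiv : Equivalence r := by
    constructor
    · intro a; exact ⟨1, by simp⟩
    · rintro a b ⟨w, rfl⟩
      refine ⟨w⁻¹, ?_⟩
      rw [map_inv]
      group
    · rintro a b c ⟨w, rfl⟩ ⟨v, rfl⟩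
      refine ⟨v * w, ?_⟩
      rw [map_mul]
      group
  have hinj : Function.Injective (fun i : ℤ => Quot.mk r (x ^ i)) := by
    intro i j hij
    by_contra hne'
    have : Relation.EqvGen r (x ^ i) (x ^ j) := Quot.eqvGen_exact hij
    exact main i j hne' ((Equivalence.eqvGen_iff hequiv).mp this)
  exact ⟨Infinite.of_injective _ hinj, x, main⟩
end

section
/- If g and h are hyperbolic isometries of an ℝ-tree T with disjoint axes A_g and A_h, then gh and hg are hyperbolic and ‖gh‖ = ‖hg‖ = ‖g‖ + ‖h‖ + 2·d(A_g, A_h). -/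
/-- An ℝ-tree: a geodesic metric space which is 0-hyperbolic (four-point condition). -/
def IsRTree (T : Type*) [MetricSpace T] : Prop :=
  (∀ x y : T, ∃ f : ℝ → T, f 0 = x ∧ f (dist x y) = y ∧
      ∀ s ∈ Set.Icc (0 : ℝ) (dist x y), ∀ t ∈ Set.Icc (0 : ℝ) (dist x y),
        dist (f s) (f t) = |s - t|) ∧
  (∀ x y z w : T, dist x y + dist z w ≤ max (dist x z + dist y w) (dist x w + dist y z))

/-- The translation length `‖g‖ = inf_x d(x, g•x)`. -/
noncomputable def translationLength {G : Type*} (T : Type*) [Group G] [MetricSpace T]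
    [MulAction G T] (g : G) : ℝ :=
  ⨅ x : T, dist x (g • x)

/-- The axis (characteristic set) of `g`: points realizing the translation length. -/
def axisSet {G : Type*} (T : Type*) [Group G] [MetricSpace T] [MulAction G T] (g : G) :
    Set T :=
  {x : T | dist x (g • x) = translationLength T g}

namespace RTreeProof

variable {T : Type*} [MetricSpace T]

/-- Gromov product. -/
noncomputable def gp (w x y : T) : ℝ := (dist w x + dist w y - dist x y) / 2

/-- Betweenness. -/
def Btw (x m y : T) : Prop := dist x m + dist m y = dist x y

abbrev FourPt (T : Type*) [MetricSpace T] : Prop :=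
  ∀ x y z w : T, dist x y + dist z w ≤ max (dist x z + dist y w) (dist x w + dist y z)

abbrev Geo (T : Type*) [MetricSpace T] : Prop :=
  ∀ x y : T, ∃ f : ℝ → T, f 0 = x ∧ f (dist x y) = y ∧
      ∀ s ∈ Set.Icc (0 : ℝ) (dist x y), ∀ t ∈ Set.Icc (0 : ℝ) (dist x y),
        dist (f s) (f t) = |s - t|

lemma gp_nonneg (w x y : T) : 0 ≤ gp w x y := by
  have h := dist_triangle x w y
  have h1 := dist_comm x w
  unfold gp; linarith

lemma gp_le_left (w x y : T) : gp w x y ≤ dist w x := by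
  have h := dist_triangle w x y
  unfold gp; linarith

lemma gp_comm (w x y : T) : gp w x y = gp w y x := by
  unfold gp; rw [dist_comm x y]; ring

lemma zero_hyp (h4 : FourPt T) (w x y z : T) :
    min (gp w x z) (gp w z y) ≤ gp w x y := by
  have h := h4 x y z w
  rcases le_max_iff.mp h with h' | h'
  · apply min_le_of_left_le
    unfold gp
    have c1 := dist_comm y w
    have c2 := dist_comm z w
    linarith
  · apply min_le_of_right_le
    unfold gp
    have c1 := dist_comm y w
    have c2 := dist_comm z w
    have c3 := dist_comm y z
    have c4 := dist_comm x w
    linarith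

lemma Btw.symm {x m y : T} (h : Btw x m y) : Btw y m x := by
  unfold Btw at *
  rw [dist_comm y m, dist_comm m x, dist_comm y x]; linarith

lemma btw_self_right (x y : T) : Btw x y y := by simp [Btw]

lemma btw_dist_right {x m y : T} (h : Btw x m y) : dist m y = dist x y - dist x m := by
  unfold Btw at h; linarith

lemma btw_unique (h4 : FourPt T) {x y u v : T} (hu : Btw x u y) (hv : Btw x v y)
    (huv : dist x u = dist x v) : u = v := by
  have h := h4 u v x y
  have e1 : dist u x = dist x u := dist_comm u x
  have e2 : dist v x = dist x v := dist_comm v x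
  have e3 : dist v y = dist x y - dist x v := btw_dist_right hv
  have e4 : dist u y = dist x y - dist x u := btw_dist_right hu
  have : dist u v ≤ 0 := by
    rcases le_max_iff.mp h with h' | h' <;> linarith
  exact dist_le_zero.mp this

/-- A geodesic with convenient pointwise properties. -/
lemma geo_spec (hgeo : Geo T) (x y : T) :
    ∃ f : ℝ → T, ∀ t, 0 ≤ t → t ≤ dist x y →
      (Btw x (f t) y ∧ dist x (f t) = t ∧
        ∀ s, 0 ≤ s → s ≤ dist x y → dist (f s) (f t) = |s - t|) := by
  obtain ⟨f, hf0, hfd, hf⟩ := hgeo x y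
  refine ⟨f, fun t ht0 ht1 => ⟨?_, ?_, ?_⟩⟩
  · have e1 : dist (f 0) (f t) = |0 - t| := hf 0 ⟨le_refl _, dist_nonneg⟩ t ⟨ht0, ht1⟩
    have e2 : dist (f t) (f (dist x y)) = |t - dist x y| :=
      hf t ⟨ht0, ht1⟩ (dist x y) ⟨dist_nonneg, le_refl _⟩
    rw [hf0] at e1; rw [hfd] at e2
    unfold Btw
    rw [e1, e2, abs_of_nonpos (by linarith), abs_of_nonpos (by linarith)]; ring
  · have e1 : dist (f 0) (f t) = |0 - t| := hf 0 ⟨le_refl _, dist_nonneg⟩ t ⟨ht0, ht1⟩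
    rw [hf0] at e1; rw [e1, abs_of_nonpos (by linarith)]; ring
  · exact fun s hs0 hs1 => hf s ⟨hs0, hs1⟩ t ⟨ht0, ht1⟩

lemma interp (hgeo : Geo T) (x y : T) (t : ℝ) (h0 : 0 ≤ t) (h1 : t ≤ dist x y) :
    ∃ m, Btw x m y ∧ dist x m = t := by
  obtain ⟨f, hf⟩ := geo_spec hgeo x y
  obtain ⟨h1', h2', _⟩ := hf t h0 h1
  exact ⟨f t, h1', h2'⟩

lemma btw_dist_le {x u y : T} (hu : Btw x u y) : dist x u ≤ dist x y := by
  have := dist_nonneg (x := u) (y := y); unfold Btw at hu; linarith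

/-- Nesting of between points. -/
lemma nest (h4 : FourPt T) (hgeo : Geo T) {x y u v : T} (hu : Btw x u y) (hv : Btw x v y)
    (huv : dist x u ≤ dist x v) :
    dist u v = dist x v - dist x u ∧ Btw x u v ∧ Btw u v y := by
  obtain ⟨f, hf⟩ := geo_spec hgeo x y
  obtain ⟨bu, du, _⟩ := hf (dist x u) dist_nonneg (btw_dist_le hu)
  obtain ⟨bv, dv, sv⟩ := hf (dist x v) dist_nonneg (btw_dist_le hv)
  have hu' : u = f (dist x u) := btw_unique h4 hu bu (by rw [du])
  have hv' : v = f (dist x v) := btw_unique h4 hv bv (by rw [dv])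
  have hduv : dist u v = dist x v - dist x u := by
    rw [hu', hv', sv (dist x u) dist_nonneg (btw_dist_le hu),
      abs_of_nonpos (by linarith), du, dv]
    ring
  refine ⟨hduv, ?_, ?_⟩
  · unfold Btw; rw [hduv]; ring
  · unfold Btw
    rw [hduv, btw_dist_right hv, btw_dist_right hu]; ring

/-- Median point of a triple. -/
lemma median (h4 : FourPt T) (hgeo : Geo T) (x y z : T) :
    ∃ m, Btw x m y ∧ Btw x m z ∧ Btw y m z ∧ dist x m = gp x y z ∧
      dist y m = gp y x z ∧ dist z m = gp z x y := by
  obtain ⟨m, hm, hd⟩ := interp hgeo x y (gp x y z) (gp_nonneg _ _ _) (gp_le_left _ _ _)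
  have hym : dist y m = gp y x z := by
    have h := btw_dist_right hm
    have c1 := dist_comm y m
    have c2 := dist_comm x y
    have c3 := dist_comm x z
    unfold gp at *
    linarith
  have hzm : dist z m = gp z x y := by
    have hub : dist z m + dist x y ≤ max (dist z x + dist m y) (dist z y + dist m x) :=
      h4 z m x y
    have c1 := dist_comm z x
    have c2 := dist_comm z y
    have c3 := dist_comm m y
    have c4 := dist_comm m x
    have c5 := dist_comm x y
    have lb1 : dist z x ≤ dist z m + dist m x := dist_triangle z m x
    have lb2 : dist z y ≤ dist z m + dist m y := dist_triangle z m y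
    have hub' : dist z m ≤ gp z x y := by
      unfold gp at *
      rcases le_max_iff.mp hub with h' | h' <;> linarith
    -- lower bound
    have hlb : gp z x y ≤ dist z m := by
      unfold gp at *
      linarith
    linarith
  refine ⟨m, hm, ?_, ?_, hd, hym, hzm⟩
  · unfold Btw
    rw [hd, dist_comm m z, hzm]
    unfold gp
    have := dist_comm x z
    have := dist_comm y z
    linarith
  · unfold Btw
    rw [hym, dist_comm m z, hzm]
    unfold gp
    have := dist_comm x y
    have := dist_comm x z
    have := dist_comm y z
    linarith

lemma gp_btw {w u a : T} (h : Btw w u a) : gp w a u = dist w u := by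
  unfold gp Btw at *
  have := dist_comm u a
  linarith

lemma gp_le_zero_dist {w u v : T} (h : gp w u v ≤ 0) :
    dist u v = dist u w + dist w v := by
  have h1 := dist_triangle u w v
  have c1 := dist_comm w u
  unfold gp at h
  linarith

/-- Distance between points hanging on two sides of a tripod. -/
lemma lemP (h4 : FourPt T) (hgeo : Geo T) {w a b u v : T}
    (hu : Btw w u a) (hv : Btw w v b) :
    dist u v = dist w u + dist w v - 2 * min (min (dist w u) (dist w v)) (gp w a b) := by
  obtain ⟨m, hma, hmb, _, hwm, _, _⟩ := median h4 hgeo w a b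
  rcases le_total (dist w u) (gp w a b) with h1 | h1 <;>
    rcases le_total (dist w v) (gp w a b) with h2 | h2
  · -- both inside [w,m]
    obtain ⟨_, hum, _⟩ := nest h4 hgeo hu hma (by rw [hwm]; exact h1)
    obtain ⟨_, hvm, _⟩ := nest h4 hgeo hv hmb (by rw [hwm]; exact h2)
    rcases le_total (dist w u) (dist w v) with h3 | h3
    · obtain ⟨e, _, _⟩ := nest h4 hgeo hum hvm h3
      have hmin : min (min (dist w u) (dist w v)) (gp w a b) = dist w u := by
        rw [min_eq_left h3, min_eq_left h1]
      rw [e, hmin]; ring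
    · obtain ⟨e, _, _⟩ := nest h4 hgeo hvm hum h3
      have hmin : min (min (dist w u) (dist w v)) (gp w a b) = dist w v := by
        rw [min_eq_right h3, min_eq_left h2]
      rw [dist_comm u v, e, hmin]; ring
  · -- u inside, v outside
    obtain ⟨e1, hum, _⟩ := nest h4 hgeo hu hma (by rw [hwm]; exact h1)
    obtain ⟨e2, _, _⟩ := nest h4 hgeo hmb hv (by rw [hwm]; exact h2)
    rw [hwm] at e1 e2
    have up : dist u v ≤ (gp w a b - dist w u) + (dist w v - gp w a b) := by
      have t := dist_triangle u m v
      have c := dist_comm u m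
      linarith
    have low : dist w v ≤ dist w u + dist u v := dist_triangle w u v
    have huv : dist u v = dist w v - dist w u := by linarith
    have h3 : dist w u ≤ dist w v := le_trans h1 h2
    have hmin : min (min (dist w u) (dist w v)) (gp w a b) = dist w u := by
      rw [min_eq_left h3, min_eq_left h1]
    rw [huv, hmin]; ring
  · -- v inside, u outside
    obtain ⟨e1, hvm, _⟩ := nest h4 hgeo hv hmb (by rw [hwm]; exact h2)
    obtain ⟨e2, _, _⟩ := nest h4 hgeo hma hu (by rw [hwm]; exact h1)
    rw [hwm] at e1 e2
    have up : dist u v ≤ (dist w u - gp w a b) + (gp w a b - dist w v) := by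
      have t := dist_triangle u m v
      have c := dist_comm u m
      have c2 := dist_comm m v
      linarith
    have low : dist w u ≤ dist w v + dist v u := dist_triangle w v u
    have c3 := dist_comm v u
    have huv : dist u v = dist w u - dist w v := by linarith
    have h3 : dist w v ≤ dist w u := le_trans h2 h1
    have hmin : min (min (dist w u) (dist w v)) (gp w a b) = dist w v := by
      rw [min_eq_right h3, min_eq_left h2]
    rw [huv, hmin]; ring
  · -- both outside
    obtain ⟨e1, _, hmua⟩ := nest h4 hgeo hma hu (by rw [hwm]; exact h1)
    obtain ⟨e2, _, hmvb⟩ := nest h4 hgeo hmb hv (by rw [hwm]; exact h2)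
    rw [hwm] at e1 e2
    rw [min_eq_right (le_min h1 h2)]
    rcases eq_or_lt_of_le h1 with hdu | hdu
    · -- u = m
      have hmu : m = u := by
        rw [← dist_le_zero]
        rw [e1, ← hdu]; ring_nf; exact le_refl 0
      rw [← hmu] at *
      have : dist m v = dist w v - gp w a b := by rw [e2]
      rw [this]
      have hwm' : dist w m = gp w a b := hwm
      rw [hwm']
      ring
    · rcases eq_or_lt_of_le h2 with hdv | hdv
      · have hmv : m = v := by
          rw [← dist_le_zero]
          rw [e2, ← hdv]; ring_nf; exact le_refl 0
        rw [← hmv] at *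
        rw [dist_comm u m, e1, hwm]
        ring
      · -- main case
        have hgpm : gp m a b = 0 := by
          have da : dist m a = dist w a - gp w a b := by
            have := btw_dist_right hma
            rw [hwm] at this; exact this
          have db : dist m b = dist w b - gp w a b := by
            have := btw_dist_right hmb
            rw [hwm] at this; exact this
          unfold gp at *
          linarith
        have hgp1 : gp m a v ≤ 0 := by
          have hz := zero_hyp h4 m a b v
          rw [hgpm] at hz
          have : gp m v b = dist m v := by rw [gp_comm]; exact gp_btw hmvb
          rcases min_le_iff.mp hz with h' | h'
          · exact h'
          · exfalso; rw [this, e2] at h'; linarith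
        have hgp1' : gp m a v = 0 := le_antisymm hgp1 (gp_nonneg _ _ _)
        have hgp2 : gp m u v ≤ 0 := by
          have hz := zero_hyp h4 m a v u
          rw [hgp1'] at hz
          have : gp m a u = dist m u := gp_btw hmua
          rcases min_le_iff.mp hz with h' | h'
          · exfalso; rw [this, e1] at h'; linarith
          · exact h'
        have := gp_le_zero_dist hgp2
        rw [dist_comm u m, e1, e2] at this
        rw [this]
        ring

/-- Distance from a point to a point on a segment. -/
lemma lemM (h4 : FourPt T) (hgeo : Geo T) {a m b : T} (hm : Btw a m b) (x : T) :
    dist x m = max (dist x a - dist a m) (dist x b - dist b m) := by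
  have hP := lemP h4 hgeo hm (btw_self_right a x)
  have hτX : gp a b x ≤ dist a x := by rw [gp_comm]; exact gp_le_left a x b
  have hmin : min (min (dist a m) (dist a x)) (gp a b x) = min (dist a m) (gp a b x) := by
    rcases le_total (dist a m) (dist a x) with h | h
    · rw [min_eq_left h]
    · rw [min_eq_right h, min_eq_right (le_trans hτX h), min_eq_right hτX]
  rw [hmin] at hP
  have hdb : dist b m = dist a b - dist a m := by
    have := btw_dist_right hm
    rw [dist_comm m b] at this; exact this
  have hxb : dist x b = dist a b + dist a x - 2 * gp a b x := by
    unfold gp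
    have := dist_comm x b
    have := dist_comm a x
    linarith
  rw [dist_comm x m, hP, hxb, hdb, dist_comm x a]
  rcases le_total (dist a m) (gp a b x) with h | h
  · rw [min_eq_left h, max_eq_left (by linarith)]
    ring
  · rw [min_eq_right h, max_eq_right (by linarith)]
    ring

/-- Projection onto an isometrically embedded line. -/
lemma proj (h4 : FourPt T) (hgeo : Geo T) (φ : ℝ → T)
    (hφ : ∀ a b, dist (φ a) (φ b) = |a - b|) (x : T) :
    ∃ t₀ : ℝ, ∀ t, dist x (φ t) = dist x (φ t₀) + |t - t₀| := by
  obtain ⟨R, hR⟩ : ∃ R, R = dist x (φ 0) + 1 := ⟨_, rfl⟩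
  have hR1 : 1 ≤ R := by rw [hR]; linarith [dist_nonneg (x := x) (y := φ 0)]
  have hRR : dist (φ (-R)) (φ R) = 2 * R := by
    rw [hφ, abs_of_nonpos (by linarith)]; ring
  obtain ⟨m, hm1, hm2, hm3, hm4, _, hm6⟩ := median h4 hgeo (φ (-R)) (φ R) x
  obtain ⟨u, hu⟩ : ∃ u, u = gp (φ (-R)) (φ R) x := ⟨_, rfl⟩
  have hu0 : 0 ≤ u := by rw [hu]; exact gp_nonneg _ _ _
  have hu2R : u ≤ 2 * R := by
    rw [hu]
    calc gp (φ (-R)) (φ R) x ≤ dist (φ (-R)) (φ R) := gp_le_left _ _ _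
    _ = 2 * R := hRR
  obtain ⟨t₀, ht₀⟩ : ∃ t₀ : ℝ, t₀ = u - R := ⟨_, rfl⟩
  have htm : m = φ t₀ := by
    apply btw_unique h4 hm1 _ _
    · unfold Btw
      rw [hφ, hφ, hφ, abs_of_nonpos (by linarith), abs_of_nonpos (by linarith),
        abs_of_nonpos (by linarith)]
      ring
    · rw [hm4, hφ, abs_of_nonpos (by linarith), ← hu]
      linarith
  have e3 : dist x (φ (-R)) = dist x m + u := by
    have hb := hm2
    unfold Btw at hb
    have c1 := dist_comm (φ (-R)) x
    have c2 := dist_comm m x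
    rw [hm4, ← hu] at hb
    linarith
  have e4 : dist x (φ R) = dist x m + (2 * R - u) := by
    have hb := hm3
    unfold Btw at hb
    have hmr : dist m (φ R) = 2 * R - u := by
      have := btw_dist_right hm1
      rw [hRR, hm4, ← hu] at this
      exact this
    have c1 := dist_comm (φ R) x
    have c2 := dist_comm m x
    have c3 := dist_comm m (φ R)
    linarith
  have claim1 : ∀ t, -R ≤ t → t ≤ R → dist x (φ t) = dist x m + |t - t₀| := by
    intro t h1 h2
    have hbt : Btw (φ (-R)) (φ t) (φ R) := by
      unfold Btw
      rw [hφ, hφ, hφ, abs_of_nonpos (by linarith), abs_of_nonpos (by linarith),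
        abs_of_nonpos (by linarith)]
      ring
    have hM := lemM h4 hgeo hbt x
    have e1 : dist (φ (-R)) (φ t) = t + R := by
      rw [hφ, abs_of_nonpos (by linarith)]; ring
    have e2 : dist (φ R) (φ t) = R - t := by
      rw [hφ, abs_of_nonneg (by linarith)]
    rw [e1, e2, e3, e4] at hM
    rw [hM]
    rcases le_total t t₀ with h | h
    · rw [max_eq_left (by linarith), abs_of_nonpos (by linarith)]
      linarith
    · rw [max_eq_right (by linarith), abs_of_nonneg (by linarith)]
      linarith
  have hmt₀ : dist x (φ t₀) = dist x m := by
    have := claim1 t₀ (by linarith) (by linarith)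
    simpa using this
  have ht₀R : |t₀| ≤ R - 1 := by
    have h0 := claim1 0 (by linarith) (by linarith)
    have : |(0:ℝ) - t₀| = |t₀| := by rw [zero_sub, abs_neg]
    rw [this] at h0
    have := dist_nonneg (x := x) (y := m)
    rw [hR] at *
    linarith [abs_nonneg t₀]
  have habs1 : t₀ ≤ R - 1 := le_trans (le_abs_self t₀) ht₀R
  have habs2 : -(R - 1) ≤ t₀ := neg_le_of_abs_le ht₀R
  have claim2 : ∀ t, R < t → dist x (φ t) = dist x m + |t - t₀| := by
    intro t ht
    have gpA : gp (φ R) (φ t₀) x = R - t₀ := by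
      unfold gp
      rw [hφ, abs_of_nonneg (by linarith)]
      have c1 := dist_comm x (φ R)
      have c2 := dist_comm x (φ t₀)
      rw [← c1, ← c2] at *
      rw [e4, hmt₀]
      linarith
    have gpB : gp (φ R) (φ t₀) (φ t) = 0 := by
      unfold gp
      rw [hφ, hφ, hφ, abs_of_nonneg (by linarith), abs_of_nonpos (by linarith),
        abs_of_nonpos (by linarith)]
      ring
    have hz := zero_hyp h4 (φ R) (φ t₀) (φ t) x
    rw [gpB, gpA] at hz
    have hle : gp (φ R) x (φ t) ≤ 0 := by
      rcases min_le_iff.mp hz with h' | h'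
      · linarith
      · exact h'
    have hd := gp_le_zero_dist hle
    rw [hd, e4, hφ, abs_of_nonpos (by linarith), abs_of_nonneg (by linarith)]
    linarith
  have claim3 : ∀ t, t < -R → dist x (φ t) = dist x m + |t - t₀| := by
    intro t ht
    have gpA : gp (φ (-R)) (φ t₀) x = u := by
      unfold gp
      rw [hφ, abs_of_nonpos (by linarith)]
      have c1 := dist_comm x (φ (-R))
      have c2 := dist_comm x (φ t₀)
      rw [← c1, ← c2] at *
      rw [e3, hmt₀]
      linarith
    have gpB : gp (φ (-R)) (φ t₀) (φ t) = 0 := by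
      unfold gp
      rw [hφ, hφ, hφ, abs_of_nonpos (by linarith), abs_of_nonneg (by linarith),
        abs_of_nonneg (by linarith)]
      ring
    have hz := zero_hyp h4 (φ (-R)) (φ t₀) (φ t) x
    rw [gpB, gpA] at hz
    have hle : gp (φ (-R)) x (φ t) ≤ 0 := by
      rcases min_le_iff.mp hz with h' | h'
      · linarith
      · exact h'
    have hd := gp_le_zero_dist hle
    rw [hd, e3, hφ, abs_of_nonneg (show (0:ℝ) ≤ -R - t by linarith),
      abs_of_nonpos (show t - t₀ ≤ 0 by linarith)]
    linarith
  refine ⟨t₀, fun t => ?_⟩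
  rw [hmt₀]
  rcases le_total t R with h1 | h1
  · rcases le_total (-R) t with h2 | h2
    · exact claim1 t h2 h1
    · rcases eq_or_lt_of_le h2 with h3 | h3
      · exact claim1 t (le_of_eq h3.symm) h1
      · exact claim3 t h3
  · rcases eq_or_lt_of_le h1 with h3 | h3
    · exact claim1 t (by linarith) (le_of_eq h3.symm)
    · exact claim2 t h3

/-- Two points projecting to different points of a line: the distance formula. -/
lemma sep (h4 : FourPt T) (φ : ℝ → T) (hφ : ∀ a b, dist (φ a) (φ b) = |a - b|)
    {x z : T} {a b : ℝ}
    (hx : ∀ t, dist x (φ t) = dist x (φ a) + |t - a|)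
    (hz : ∀ t, dist z (φ t) = dist z (φ b) + |t - b|) (hab : a ≠ b) :
    dist x z = dist x (φ a) + |a - b| + dist z (φ b) := by
  have habs : |b - a| = |a - b| := abs_sub_comm b a
  have gpA : gp (φ a) x (φ b) = 0 := by
    unfold gp
    rw [dist_comm (φ a) x, hφ, hx b, habs]
    ring
  have gpB : gp (φ a) z (φ b) = |a - b| := by
    unfold gp
    rw [dist_comm (φ a) z, hφ, hz a, abs_sub_comm a b, habs]
    ring
  have hpos : 0 < |a - b| := abs_pos.mpr (sub_ne_zero.mpr hab)
  have hz0 := zero_hyp h4 (φ a) x (φ b) z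
  rw [gpA, gpB] at hz0
  have hle : gp (φ a) x z ≤ 0 := by
    rcases min_le_iff.mp hz0 with h' | h'
    · exact h'
    · linarith
  have hd := gp_le_zero_dist hle
  rw [hd, dist_comm (φ a) z, hz a]
  ring

section Action

variable {G : Type*} [Group G] [MulAction G T]

lemma dist_smul' (hiso : ∀ g : G, Isometry (fun x : T => g • x)) (g : G) (u v : T) :
    dist (g • u) (g • v) = dist u v := (hiso g).dist_eq u v

lemma btw_smul (hiso : ∀ g : G, Isometry (fun x : T => g • x)) (g : G) {x m y : T}
    (h : Btw x m y) : Btw (g • x) (g • m) (g • y) := by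
  unfold Btw at *
  rw [dist_smul' hiso, dist_smul' hiso, dist_smul' hiso]
  exact h

lemma translationLength_le (k : G) (x : T) :
    translationLength T k ≤ dist x (k • x) :=
  ciInf_le ⟨0, by rintro _ ⟨z, rfl⟩; exact dist_nonneg⟩ x

/-- Existence of a "criterion point" for an isometry with positive translation length:
a point `y` with `d(y, k²y) = 2 d(y, ky) > 0`. -/
lemma exists_crit (h4 : FourPt T) (hgeo : Geo T)
    (hiso : ∀ g : G, Isometry (fun x : T => g • x)) (k : G)
    (hk : 0 < translationLength T k) [Nonempty T] :
    ∃ y : T, 0 < dist y (k • y) ∧ dist y (k • k • y) = 2 * dist y (k • y) := by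
  obtain ⟨x₀⟩ : Nonempty T := inferInstance
  obtain ⟨L, hL⟩ : ∃ L, L = dist x₀ (k • x₀) := ⟨_, rfl⟩
  have hL0 : 0 < L := by rw [hL]; exact lt_of_lt_of_le hk (translationLength_le k x₀)
  obtain ⟨m, hm, hxm⟩ := interp hgeo x₀ (k • x₀) (L / 2)
    (by linarith) (by rw [← hL]; linarith)
  have hmx : dist m (k • x₀) = L / 2 := by
    have h := btw_dist_right hm; rw [hxm, ← hL] at h; rw [h]; ring
  obtain ⟨σ, hσ⟩ : ∃ σ, σ = gp (k • x₀) x₀ (k • k • x₀) := ⟨_, rfl⟩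
  have hσ0 : 0 ≤ σ := by rw [hσ]; exact gp_nonneg _ _ _
  have d1 : dist (k • x₀) (k • k • x₀) = L := by
    rw [hL]; exact dist_smul' hiso k x₀ (k • x₀)
  have hσL : σ ≤ L := by
    have h := gp_le_left (k • x₀) x₀ (k • k • x₀)
    rw [← hσ, dist_comm, ← hL] at h
    exact h
  have hBkm : Btw (k • x₀) (k • m) (k • k • x₀) := btw_smul hiso k hm
  have hkxkm : dist (k • x₀) (k • m) = L / 2 := by
    rw [dist_smul' hiso]; exact hxm
  have hkmk2 : dist (k • m) (k • k • x₀) = L / 2 := by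
    rw [dist_smul' hiso]; exact hmx
  -- displacement of the midpoint
  have hPm := lemP h4 hgeo hm.symm hBkm
  rw [dist_comm (k • x₀) m, hmx, hkxkm, ← hσ, min_self] at hPm
  have hdisp : 0 < dist m (k • m) := lt_of_lt_of_le hk (translationLength_le k m)
  have hσhalf : σ < L / 2 := by
    by_contra hcon
    push_neg at hcon
    rw [min_eq_left hcon] at hPm
    rw [hPm] at hdisp
    linarith
  rw [min_eq_right (le_of_lt hσhalf)] at hPm
  -- hPm : dist m (k • m) = L / 2 + L / 2 - 2 * σ
  have dx2 : dist x₀ (k • k • x₀) = 2 * L - 2 * σ := by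
    have c1 := dist_comm (k • x₀) x₀
    unfold gp at hσ
    linarith
  have dxkm : dist x₀ (k • m) = 3 * (L / 2) - 2 * σ := by
    have hM := lemM h4 hgeo hBkm x₀
    rw [hkxkm, dist_comm (k • k • x₀) (k • m), hkmk2, ← hL, dx2] at hM
    rw [hM, max_eq_right (by linarith)]
    ring
  have dk2m : dist (k • x₀) (k • k • m) = 3 * (L / 2) - 2 * σ := by
    have h : dist (k • x₀) (k • k • m) = dist x₀ (k • m) := dist_smul' hiso k x₀ (k • m)
    rw [h, dxkm]
  have dx2m2 : dist (k • k • x₀) (k • k • m) = L / 2 := by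
    have h : dist (k • k • x₀) (k • k • m) = dist (k • x₀) (k • m) :=
      dist_smul' hiso k (k • x₀) (k • m)
    rw [h, hkxkm]
  have gp1 : gp (k • x₀) (k • k • x₀) (k • k • m) = L - σ := by
    unfold gp
    rw [d1, dk2m, dx2m2]
    ring
  -- squeeze: gp (k•x₀) x₀ (k•k•m) = σ
  have hπ : gp (k • x₀) x₀ (k • k • m) = σ := by
    have hzl := zero_hyp h4 (k • x₀) x₀ (k • k • m) (k • k • x₀)
    rw [← hσ, gp1] at hzl
    have hzu := zero_hyp h4 (k • x₀) x₀ (k • k • x₀) (k • k • m)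
    have hgc : gp (k • x₀) (k • k • m) (k • k • x₀) = L - σ := by
      rw [gp_comm]; exact gp1
    rw [← hσ, hgc] at hzu
    rw [min_eq_left (by linarith)] at hzl
    rcases min_le_iff.mp hzu with h' | h'
    · linarith
    · linarith
  -- second application of P
  have hP2 := lemP h4 hgeo hm.symm (btw_self_right (k • x₀) (k • k • m))
  rw [dist_comm (k • x₀) m, hmx, dk2m, hπ] at hP2
  have hmin2 : min (min (L / 2) (3 * (L / 2) - 2 * σ)) σ = σ := by
    rw [min_eq_right]
    apply le_min <;> linarith
  rw [hmin2] at hP2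
  refine ⟨m, hdisp, ?_⟩
  rw [hP2, hPm]
  ring

/-- From a criterion point, build a `k`-equivariant isometrically embedded line. -/
lemma line_of_crit (h4 : FourPt T) (hgeo : Geo T)
    (hiso : ∀ g : G, Isometry (fun x : T => g • x)) (k : G) (y : T) (c : ℝ) (hc : 0 < c)
    (h1 : dist y (k • y) = c) (h2 : dist y (k • k • y) = 2 * c) :
    ∃ φ : ℝ → T, φ 0 = y ∧ (∀ a b, dist (φ a) (φ b) = |a - b|) ∧
      ∀ t, φ (t + c) = k • φ t := by
  -- the chain of iterates
  have pow2smul : ∀ (n : ℕ), (k ^ (n + 2)) • y = (k ^ n) • (k • k • y) := by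
    intro n
    rw [pow_add, mul_smul]
    congr 1
    rw [pow_two, mul_smul]
  have pow1smul : ∀ (n : ℕ) (u : T), (k ^ (n + 1)) • u = (k ^ n) • (k • u) := by
    intro n u
    rw [pow_succ, mul_smul]
  have chain : ∀ n : ℕ, dist y ((k ^ n) • y) = n * c := by
    intro n
    induction n using Nat.twoStepInduction with
    | zero => simp
    | one => simpa using h1
    | more n ih1 ih2 =>
      have dnn2 : dist ((k ^ n) • y) ((k ^ (n + 2)) • y) = 2 * c := by
        rw [pow2smul n, dist_smul' hiso, h2]
      have dn1 : dist ((k ^ n) • y) ((k ^ (n + 1)) • y) = c := by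
        rw [pow1smul n y, dist_smul' hiso, h1]
      have dn12 : dist ((k ^ (n + 1)) • y) ((k ^ (n + 2)) • y) = c := by
        have e : (k ^ (n + 2)) • y = (k ^ (n + 1)) • (k • y) := pow1smul (n + 1) y
        rw [e, dist_smul' hiso, h1]
      have gpA : gp ((k ^ (n + 1)) • y) ((k ^ n) • y) y = c := by
        unfold gp
        have e1 := dist_comm ((k ^ n) • y) ((k ^ (n + 1)) • y)
        have e2 := dist_comm y ((k ^ (n + 1)) • y)
        have e3 := dist_comm y ((k ^ n) • y)
        push_cast at ih1 ih2 ⊢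
        linarith
      have gpB : gp ((k ^ (n + 1)) • y) ((k ^ n) • y) ((k ^ (n + 2)) • y) = 0 := by
        unfold gp
        have e1 := dist_comm ((k ^ n) • y) ((k ^ (n + 1)) • y)
        linarith
      have hz := zero_hyp h4 ((k ^ (n + 1)) • y) ((k ^ n) • y) ((k ^ (n + 2)) • y) y
      rw [gpB, gpA] at hz
      have hle : gp ((k ^ (n + 1)) • y) y ((k ^ (n + 2)) • y) ≤ 0 := by
        rcases min_le_iff.mp hz with h' | h'
        · linarith
        · exact h'
      have := gp_le_zero_dist hle
      have e2 := dist_comm y ((k ^ (n + 1)) • y)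
      push_cast [this, dn12] at ih2 ⊢
      linarith
  -- the geodesic segment from y to k•y
  obtain ⟨f, hf⟩ := geo_spec hgeo y (k • y)
  have hf' : ∀ t, 0 ≤ t → t ≤ c →
      (Btw y (f t) (k • y) ∧ dist y (f t) = t ∧
        ∀ s, 0 ≤ s → s ≤ c → dist (f s) (f t) = |s - t|) := by
    intro t ht0 ht1
    obtain ⟨b1, b2, b3⟩ := hf t ht0 (by rw [h1]; exact ht1)
    exact ⟨b1, b2, fun s hs0 hs1 => b3 s hs0 (by rw [h1]; exact hs1)⟩
  have hf0 : f 0 = y := by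
    have := (hf' 0 le_rfl (le_of_lt hc)).2.1
    have h := dist_le_zero.mp (le_of_eq this)
    exact h.symm
  -- distance from y to points on translated segments
  have c1 : ∀ (n : ℕ) (t : ℝ), 0 ≤ t → t ≤ c →
      dist y ((k ^ n) • f t) = n * c + t := by
    intro n t ht0 ht1
    obtain ⟨bt, dt, _⟩ := hf' t ht0 ht1
    have btn : Btw ((k ^ n) • y) ((k ^ n) • f t) ((k ^ (n + 1)) • y) := by
      rw [pow1smul n y]
      exact btw_smul hiso (k ^ n) bt
    have hM := lemM h4 hgeo btn y
    have e1 : dist ((k ^ n) • y) ((k ^ n) • f t) = t := by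
      rw [dist_smul' hiso, dt]
    have e2 : dist ((k ^ (n + 1)) • y) ((k ^ n) • f t) = c - t := by
      rw [pow1smul n y, dist_smul' hiso]
      have := btw_dist_right bt
      rw [dist_comm (k • y) (f t), this, dt, h1]
    rw [e1, e2, chain n, chain (n + 1)] at hM
    rw [hM]
    push_cast
    rw [max_eq_right (by linarith)]
    ring
  -- distance between points on different segments
  have c2 : ∀ (n : ℕ) (s t : ℝ), 0 ≤ s → s ≤ c → 0 ≤ t → t ≤ c →
      dist (f s) ((k ^ (n + 1)) • f t) = (n + 1) * c + t - s := by
    intro n s t hs0 hs1 ht0 ht1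
    obtain ⟨bs, ds, _⟩ := hf' s hs0 hs1
    have hM := lemM h4 hgeo bs ((k ^ (n + 1)) • f t)
    have e1 : dist ((k ^ (n + 1)) • f t) y = ((n + 1 : ℕ) : ℝ) * c + t := by
      rw [dist_comm]; exact c1 (n + 1) t ht0 ht1
    have e2 : dist ((k ^ (n + 1)) • f t) (k • y) = n * c + t := by
      have e : (k ^ (n + 1)) • f t = k • ((k ^ n) • f t) := by
        rw [pow_succ', mul_smul]
      rw [e, dist_comm, dist_smul' hiso, c1 n t ht0 ht1]
    have e3 : dist (k • y) (f s) = c - s := by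
      have := btw_dist_right bs
      rw [dist_comm (k • y) (f s), this, ds, h1]
    rw [ds, e1, e2, e3] at hM
    rw [dist_comm, hM]
    push_cast
    rw [max_eq_left (by linarith)]
  -- define the line
  refine ⟨fun t => (k ^ ⌊t / c⌋) • f (t - ⌊t / c⌋ * c), ?_, ?_, ?_⟩
  · simp only [zero_div, Int.floor_zero]
    norm_num
    rw [hf0]
  · -- distances
    have key : ∀ a b : ℝ, a ≤ b →
        dist ((k ^ ⌊a / c⌋) • f (a - ⌊a / c⌋ * c)) ((k ^ ⌊b / c⌋) • f (b - ⌊b / c⌋ * c))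
          = b - a := by
      intro a b hab
      have hna : (0:ℝ) ≤ a - ⌊a / c⌋ * c := Int.sub_floor_div_mul_nonneg a hc
      have hna' : a - ⌊a / c⌋ * c < c := Int.sub_floor_div_mul_lt a hc
      have hnb : (0:ℝ) ≤ b - ⌊b / c⌋ * c := Int.sub_floor_div_mul_nonneg b hc
      have hnb' : b - ⌊b / c⌋ * c < c := Int.sub_floor_div_mul_lt b hc
      have hmono : ⌊a / c⌋ ≤ ⌊b / c⌋ :=
        Int.floor_le_floor (div_le_div_of_nonneg_right hab (le_of_lt hc))
      have hrw : (k ^ ⌊b / c⌋) = (k ^ ⌊a / c⌋) * k ^ (⌊b / c⌋ - ⌊a / c⌋) := by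
        rw [← zpow_add]; congr 1; ring
      rw [hrw, mul_smul, dist_smul' hiso]
      have hm0 : (0:ℤ) ≤ ⌊b / c⌋ - ⌊a / c⌋ := sub_nonneg.mpr hmono
      obtain ⟨m, hmeq⟩ : ∃ m : ℕ, (m : ℤ) = ⌊b / c⌋ - ⌊a / c⌋ :=
        ⟨_, Int.toNat_of_nonneg hm0⟩
      rw [← hmeq, zpow_natCast]
      have hcast : (m : ℝ) = ((⌊b / c⌋ : ℤ) : ℝ) - ((⌊a / c⌋ : ℤ) : ℝ) := by
        have hq := congrArg (fun z : ℤ => (z : ℝ)) hmeq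
        push_cast at hq
        exact hq
      cases m with
      | zero =>
        rw [pow_zero, one_smul]
        have habs := (hf' (b - ⌊b / c⌋ * c) hnb (le_of_lt hnb')).2.2
          (a - ⌊a / c⌋ * c) hna (le_of_lt hna')
        rw [habs]
        norm_num at hcast
        have hfeq : ((⌊a / c⌋ : ℤ) : ℝ) * c = ((⌊b / c⌋ : ℤ) : ℝ) * c := by
          have h9 : ((⌊a / c⌋ : ℤ) : ℝ) = ((⌊b / c⌋ : ℤ) : ℝ) := by linarith
          rw [h9]
        rw [abs_of_nonpos (by linarith)]
        linarith
      | succ m' =>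
        rw [c2 m' (a - ⌊a / c⌋ * c) (b - ⌊b / c⌋ * c) hna (le_of_lt hna')
          hnb (le_of_lt hnb')]
        push_cast at hcast
        nlinarith [hcast]
    intro a b
    rcases le_total a b with hab | hab
    · rw [key a b hab, abs_of_nonpos (by linarith)]; ring
    · rw [dist_comm, key b a hab, abs_of_nonneg (by linarith)]
  · -- equivariance
    intro t
    have hdiv : (t + c) / c = t / c + 1 := by
      field_simp
    have hfl : ⌊(t + c) / c⌋ = ⌊t / c⌋ + 1 := by
      rw [hdiv, Int.floor_add_one]
    have harg : t + c - (⌊t / c⌋ + 1 : ℤ) * c = t - ⌊t / c⌋ * c := by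
      push_cast; ring
    simp only [hfl, harg]
    rw [show (⌊t / c⌋ + 1 : ℤ) = 1 + ⌊t / c⌋ by ring, zpow_add, zpow_one, mul_smul]

/-- An equivariant line determines the translation length and the axis. -/
lemma translen (h4 : FourPt T) (hgeo : Geo T)
    (hiso : ∀ g : G, Isometry (fun x : T => g • x)) (k : G) (φ : ℝ → T) (c : ℝ)
    (hc : 0 < c) (hφ : ∀ a b, dist (φ a) (φ b) = |a - b|)
    (hk : ∀ t, φ (t + c) = k • φ t) :
    translationLength T k = c ∧ axisSet T k = Set.range φ := by
  have kinv : ∀ t, k⁻¹ • φ t = φ (t - c) := by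
    intro t
    have h := hk (t - c)
    rw [sub_add_cancel] at h
    rw [h, inv_smul_smul]
  have key : ∀ z : T, ∃ t₀, dist z (k • z) = c + 2 * dist z (φ t₀) := by
    intro z
    obtain ⟨t₀, hp⟩ := proj h4 hgeo φ hφ z
    have haux : ∀ t, dist (k • z) (φ t) = dist z (φ t₀) + |t - c - t₀| := by
      intro t
      have e := (dist_smul' hiso k⁻¹ (k • z) (φ t)).symm
      rw [inv_smul_smul, kinv] at e
      rw [e, hp (t - c)]
    have hbase : dist (k • z) (φ (t₀ + c)) = dist z (φ t₀) := by
      rw [haux, show t₀ + c - c - t₀ = 0 by ring]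
      simp
    have hp2 : ∀ t, dist (k • z) (φ t) = dist (k • z) (φ (t₀ + c)) + |t - (t₀ + c)| := by
      intro t
      rw [haux t, hbase, show t - c - t₀ = t - (t₀ + c) by ring]
    have hsep := sep h4 φ hφ hp hp2 (show t₀ ≠ t₀ + c by intro hcon; linarith)
    refine ⟨t₀, ?_⟩
    rw [hsep, hbase, show t₀ - (t₀ + c) = -c by ring, abs_neg, abs_of_nonneg (le_of_lt hc)]
    ring
  have hlow : ∀ z : T, c ≤ dist z (k • z) := by
    intro z
    obtain ⟨t₀, h⟩ := key z
    rw [h]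
    linarith [dist_nonneg (x := z) (y := φ t₀)]
  have hline_dist : ∀ s : ℝ, dist (φ s) (k • φ s) = c := by
    intro s
    rw [← hk s, hφ, show s - (s + c) = -c by ring, abs_neg, abs_of_nonneg (le_of_lt hc)]
  haveI : Nonempty T := ⟨φ 0⟩
  have htl : translationLength T k = c := by
    apply le_antisymm
    · have h := translationLength_le k (φ 0)
      rw [hline_dist 0] at h
      exact h
    · exact le_ciInf hlow
  refine ⟨htl, ?_⟩
  ext z
  simp only [axisSet, Set.mem_setOf_eq, htl]
  constructor
  · intro hzc
    obtain ⟨t₀, hkey⟩ := key z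
    have : dist z (φ t₀) ≤ 0 := by linarith
    exact ⟨t₀, (dist_le_zero.mp this).symm⟩
  · rintro ⟨s, rfl⟩
    exact hline_dist s

lemma translen_conj (hiso : ∀ g : G, Isometry (fun x : T => g • x)) (a k : G) :
    translationLength T (a * k * a⁻¹) = translationLength T k := by
  rcases isEmpty_or_nonempty T with hT | hT
  · unfold translationLength
    rw [Real.iInf_of_isEmpty, Real.iInf_of_isEmpty]
  · have hpt : ∀ x : T, dist x ((a * k * a⁻¹) • x) = dist (a⁻¹ • x) (k • a⁻¹ • x) := by
      intro x
      have e := (dist_smul' hiso a⁻¹ x ((a * k * a⁻¹) • x)).symm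
      rw [e]
      congr 1
      rw [mul_smul, mul_smul, inv_smul_smul]
    have bdd1 : BddBelow (Set.range fun z : T => dist z ((a * k * a⁻¹) • z)) :=
      ⟨0, by rintro _ ⟨w, rfl⟩; exact dist_nonneg⟩
    have bdd2 : BddBelow (Set.range fun z : T => dist z (k • z)) :=
      ⟨0, by rintro _ ⟨w, rfl⟩; exact dist_nonneg⟩
    unfold translationLength
    apply le_antisymm
    · apply le_ciInf
      intro x
      calc ⨅ z : T, dist z ((a * k * a⁻¹) • z) ≤
          dist (a • x) ((a * k * a⁻¹) • (a • x)) := ciInf_le bdd1 _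
        _ = dist (a⁻¹ • a • x) (k • a⁻¹ • a • x) := hpt _
        _ = dist x (k • x) := by rw [inv_smul_smul]
    · apply le_ciInf
      intro x
      calc ⨅ z : T, dist z (k • z) ≤ dist (a⁻¹ • x) (k • a⁻¹ • x) := ciInf_le bdd2 _
        _ = dist x ((a * k * a⁻¹) • x) := (hpt x).symm


end Action

end RTreeProof

open RTreeProof

/-- (Culler–Morgan) If `g, h` are hyperbolic isometries of an ℝ-tree with disjoint
axes, then `gh` and `hg` are hyperbolic with
`‖gh‖ = ‖hg‖ = ‖g‖ + ‖h‖ + 2·d(A_g, A_h)`. -/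
theorem product_hyperbolic_of_disjoint_axes {G T : Type*} [Group G] [MetricSpace T]
    [MulAction G T] (hT : IsRTree T) (hiso : ∀ g : G, Isometry (fun x : T => g • x))
    (g h : G) (hg : 0 < translationLength T g) (hh : 0 < translationLength T h)
    (hdisj : Disjoint (axisSet T g) (axisSet T h))
    (d : ℝ) (hd : d = ⨅ (x : axisSet T g) (y : axisSet T h), dist (x : T) (y : T)) :
    0 < translationLength T (g * h) ∧ 0 < translationLength T (h * g) ∧
      translationLength T (g * h) = translationLength T g + translationLength T h + 2 * d ∧
      translationLength T (h * g) = translationLength T g + translationLength T h + 2 * d := by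
  obtain ⟨hgeo, h4⟩ := hT
  haveI hne : Nonempty T := by
    rcases isEmpty_or_nonempty T with hE | hN
    · exfalso
      unfold translationLength at hg
      rw [Real.iInf_of_isEmpty] at hg
      exact lt_irrefl 0 hg
    · exact hN
  -- axes as equivariant lines
  obtain ⟨yg, hyg, hyg2⟩ := exists_crit h4 hgeo hiso g hg
  obtain ⟨cg, hcgdef⟩ : ∃ c, dist yg (g • yg) = c := ⟨_, rfl⟩
  have hcg0 : 0 < cg := by rw [← hcgdef]; exact hyg
  rw [hcgdef] at hyg2
  obtain ⟨φ, hφ0, hφd, hφk⟩ := line_of_crit h4 hgeo hiso g yg cg hcg0 hcgdef hyg2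
  obtain ⟨hgc, hgax⟩ := translen h4 hgeo hiso g φ cg hcg0 hφd hφk
  obtain ⟨yh, hyh, hyh2⟩ := exists_crit h4 hgeo hiso h hh
  obtain ⟨ch, hchdef⟩ : ∃ c, dist yh (h • yh) = c := ⟨_, rfl⟩
  have hch0 : 0 < ch := by rw [← hchdef]; exact hyh
  rw [hchdef] at hyh2
  obtain ⟨ψ, hψ0, hψd, hψk⟩ := line_of_crit h4 hgeo hiso h yh ch hch0 hchdef hyh2
  obtain ⟨hhc, hhax⟩ := translen h4 hgeo hiso h ψ ch hch0 hψd hψk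
  -- the bridge
  obtain ⟨s₀, hs⟩ := proj h4 hgeo ψ hψd (φ 0)
  obtain ⟨r₀, hr⟩ := proj h4 hgeo φ hφd (ψ s₀)
  obtain ⟨Δ, hΔdef⟩ : ∃ D, dist (ψ s₀) (φ r₀) = D := ⟨_, rfl⟩
  have hΔ0 : 0 ≤ Δ := by rw [← hΔdef]; exact dist_nonneg
  have hqmem : ψ s₀ ∈ axisSet T h := by rw [hhax]; exact ⟨s₀, rfl⟩
  have hpmem : φ r₀ ∈ axisSet T g := by rw [hgax]; exact ⟨r₀, rfl⟩
  have hΔpos : 0 < Δ := by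
    rcases lt_or_eq_of_le hΔ0 with hlt | heq
    · exact hlt
    · exfalso
      have hzero : dist (ψ s₀) (φ r₀) ≤ 0 := by rw [hΔdef, ← heq]
      have heqpt : ψ s₀ = φ r₀ := dist_le_zero.mp hzero
      exact Set.disjoint_left.mp hdisj (heqpt ▸ hpmem) hqmem
  -- bridge distance formulas
  have hq_phi : ∀ s, dist (ψ s₀) (φ s) = Δ + |s - r₀| := by
    intro s
    rw [hr s, hΔdef, add_comm]
  have gp1 : ∀ s, Δ ≤ gp (ψ s₀) (φ 0) (φ s) := by
    intro s
    unfold gp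
    rw [hq_phi 0, hq_phi s, hφd]
    have htri : |0 - s| ≤ |0 - r₀| + |r₀ - s| := abs_sub_le 0 r₀ s
    have : |r₀ - s| = |s - r₀| := abs_sub_comm r₀ s
    linarith
  have gp2 : ∀ t, gp (ψ s₀) (φ 0) (ψ t) = 0 := by
    intro t
    unfold gp
    rw [hψd, hs t, dist_comm (ψ s₀) (φ 0), abs_sub_comm s₀ t]
    ring
  have hbr : ∀ s t, dist (φ s) (ψ t) = |s - r₀| + Δ + |t - s₀| := by
    intro s t
    have hz := zero_hyp h4 (ψ s₀) (φ 0) (ψ t) (φ s)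
    rw [gp2 t] at hz
    have hle : gp (ψ s₀) (φ s) (ψ t) ≤ 0 := by
      rcases min_le_iff.mp hz with h' | h'
      · linarith [gp1 s]
      · exact h'
    have hdd := gp_le_zero_dist hle
    rw [hdd, dist_comm (φ s) (ψ s₀), hq_phi s, hψd, abs_sub_comm s₀ t]
    ring
  have hψφ : ∀ t s, dist (ψ t) (φ s) = (Δ + |t - s₀|) + |s - r₀| := by
    intro t s
    rw [dist_comm, hbr]
    ring
  have hcrossφ : ∀ t s, dist (ψ t) (φ s) = dist (ψ t) (φ r₀) + |s - r₀| := by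
    intro t s
    rw [hψφ, hψφ]
    simp
  -- φ-projection of g⁻¹ • (ψ t)
  have hginvψ : ∀ t s, dist (g⁻¹ • ψ t) (φ s) = (Δ + |t - s₀|) + |s + cg - r₀| := by
    intro t s
    have e := (dist_smul' hiso g (g⁻¹ • ψ t) (φ s)).symm
    rw [smul_inv_smul, ← hφk s] at e
    rw [e, hψφ t (s + cg)]
  have hztproj : ∀ t s, dist (g⁻¹ • ψ t) (φ s)
      = dist (g⁻¹ • ψ t) (φ (r₀ - cg)) + |s - (r₀ - cg)| := by
    intro t s
    rw [hginvψ, hginvψ, show r₀ - cg + cg - r₀ = (0:ℝ) by ring,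
      show s + cg - r₀ = s - (r₀ - cg) by ring]
    simp
  have hrne : r₀ ≠ r₀ - cg := by intro hcon; linarith
  -- the key distance: dist (ψ (s₀+ch)) (g⁻¹ • ψ t)
  have hkey : ∀ t, dist (ψ (s₀ + ch)) (g⁻¹ • ψ t) = (cg + ch + 2 * Δ) + |t - s₀| := by
    intro t
    have hsep2 := sep h4 φ hφd (hcrossφ (s₀ + ch)) (hztproj t) hrne
    rw [hsep2, hψφ (s₀ + ch) r₀, hginvψ t (r₀ - cg),
      show s₀ + ch - s₀ = ch by ring, show r₀ - (r₀ - cg) = cg by ring,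
      show r₀ - cg + cg - r₀ = (0:ℝ) by ring, abs_of_nonneg (le_of_lt hch0),
      abs_of_nonneg (le_of_lt hcg0)]
    simp
    ring
  have e1 : (g * h) • ψ s₀ = g • ψ (s₀ + ch) := by
    rw [mul_smul, ← hψk]
  have hwdist : ∀ t, dist ((g * h) • ψ s₀) (ψ t) = (cg + ch + 2 * Δ) + |t - s₀| := by
    intro t
    have e := (dist_smul' hiso g⁻¹ ((g * h) • ψ s₀) (ψ t)).symm
    have e2 : g⁻¹ • ((g * h) • ψ s₀) = ψ (s₀ + ch) := by rw [e1, inv_smul_smul]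
    rw [e, e2, hkey t]
  have D1 : dist (ψ s₀) ((g * h) • ψ s₀) = cg + ch + 2 * Δ := by
    rw [dist_comm]
    have := hwdist s₀
    simpa using this
  -- ψ-projection of h⁻¹ • g⁻¹ • (ψ t)
  have hu2 : ∀ t u, dist (g⁻¹ • ψ t) (ψ u)
      = ((Δ + |t - s₀|) + cg + Δ) + |u - s₀| := by
    intro t u
    have hsep3 := sep h4 φ hφd (hztproj t) (hcrossφ u) (by intro hcon; linarith)
    rw [hsep3, hginvψ t (r₀ - cg), hψφ u r₀,
      show r₀ - cg + cg - r₀ = (0:ℝ) by ring, show r₀ - cg - r₀ = -cg by ring,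
      abs_neg, abs_of_nonneg (le_of_lt hcg0)]
    simp
    ring
  have hv : ∀ t u, dist (h⁻¹ • g⁻¹ • ψ t) (ψ u)
      = ((Δ + |t - s₀|) + cg + Δ) + |u + ch - s₀| := by
    intro t u
    have e := (dist_smul' hiso h (h⁻¹ • g⁻¹ • ψ t) (ψ u)).symm
    rw [smul_inv_smul, ← hψk u] at e
    rw [e, hu2 t (u + ch)]
  have hvproj : ∀ t u, dist (h⁻¹ • g⁻¹ • ψ t) (ψ u)
      = dist (h⁻¹ • g⁻¹ • ψ t) (ψ (s₀ - ch)) + |u - (s₀ - ch)| := by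
    intro t u
    rw [hv, hv, show s₀ - ch + ch - s₀ = (0:ℝ) by ring,
      show u + ch - s₀ = u - (s₀ - ch) by ring]
    simp
  have hwproj : ∀ u, dist ((g * h) • ψ s₀) (ψ u)
      = dist ((g * h) • ψ s₀) (ψ s₀) + |u - s₀| := by
    intro u
    rw [hwdist, hwdist]
    simp
  have D2 : dist (ψ s₀) ((g * h) • (g * h) • ψ s₀) = 2 * (cg + ch + 2 * Δ) := by
    have e := (dist_smul' hiso ((g * h)⁻¹) ((g * h) • (g * h) • ψ s₀) (ψ s₀)).symm
    rw [inv_smul_smul] at e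
    rw [dist_comm, e]
    have einv : (g * h)⁻¹ • ψ s₀ = h⁻¹ • g⁻¹ • ψ s₀ := by
      rw [mul_inv_rev, mul_smul]
    rw [einv]
    have hsep4 := sep h4 ψ hψd hwproj (hvproj s₀) (by intro hcon; linarith)
    rw [hsep4, hv s₀ (s₀ - ch)]
    have hD1' : dist ((g * h) • ψ s₀) (ψ s₀) = cg + ch + 2 * Δ := by
      have := hwdist s₀
      simpa using this
    rw [hD1', show s₀ - (s₀ - ch) = ch by ring, abs_of_nonneg (le_of_lt hch0),
      show s₀ - ch + ch - s₀ = (0:ℝ) by ring]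
    simp
    ring
  -- the line for g*h
  have hL0 : 0 < cg + ch + 2 * Δ := by linarith
  obtain ⟨Φ, hΦ0, hΦd, hΦk⟩ :=
    line_of_crit h4 hgeo hiso (g * h) (ψ s₀) (cg + ch + 2 * Δ) hL0 D1 (by rw [D2])
  obtain ⟨hghc, _⟩ := translen h4 hgeo hiso (g * h) Φ (cg + ch + 2 * Δ) hL0 hΦd hΦk
  -- d = Δ
  haveI hneg : Nonempty ↥(axisSet T g) := ⟨⟨φ r₀, hpmem⟩⟩
  haveI hneh : Nonempty ↥(axisSet T h) := ⟨⟨ψ s₀, hqmem⟩⟩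
  have hdΔ : d = Δ := by
    rw [hd]
    have hbddin : ∀ x : T, BddBelow (Set.range fun y : ↥(axisSet T h) => dist x (y : T)) :=
      fun x => ⟨0, by rintro _ ⟨w, rfl⟩; exact dist_nonneg⟩
    have hbddout : BddBelow (Set.range fun x : ↥(axisSet T g) =>
        ⨅ y : ↥(axisSet T h), dist (x : T) (y : T)) := by
      refine ⟨0, ?_⟩
      rintro _ ⟨w, rfl⟩
      exact Real.iInf_nonneg fun y => dist_nonneg
    apply le_antisymm
    · calc (⨅ (x : ↥(axisSet T g)) (y : ↥(axisSet T h)), dist (x : T) (y : T))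
          ≤ ⨅ y : ↥(axisSet T h), dist (φ r₀) (y : T) := ciInf_le hbddout ⟨φ r₀, hpmem⟩
        _ ≤ dist (φ r₀) (ψ s₀) := ciInf_le (hbddin _) ⟨ψ s₀, hqmem⟩
        _ = Δ := by rw [dist_comm]; exact hΔdef
    · apply le_ciInf
      rintro ⟨xv, hxv⟩
      apply le_ciInf
      rintro ⟨yv, hyv⟩
      rw [hgax] at hxv
      rw [hhax] at hyv
      obtain ⟨s, rfl⟩ := hxv
      obtain ⟨t, rfl⟩ := hyv
      show Δ ≤ dist (φ s) (ψ t)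
      rw [hbr s t]
      have := abs_nonneg (s - r₀)
      have := abs_nonneg (t - s₀)
      linarith
  -- conjugation for h*g
  have hhgc : translationLength T (h * g) = cg + ch + 2 * Δ := by
    have hconj : h * g = h * (g * h) * h⁻¹ := by group
    rw [hconj, translen_conj hiso h (g * h), hghc]
  refine ⟨?_, ?_, ?_, ?_⟩
  · rw [hghc]; linarith
  · rw [hhgc]; linarith
  · rw [hghc, hgc, hhc, hdΔ]
  · rw [hhgc, hgc, hhc, hdΔ]
end

section
/- Let G act isometrically on an ℝ-tree T. If m and n act hyperbolically on T with disjoint axes, then for non-zero integers a, b the elements m^b and n^{-a} have disjoint axes and their product is hyperbolic. Consequently, if G ◁ M is a normal subgroup and M acts on T so that two elements t^a·u and t^b·v (u, v ∈ G, a, b ≠ 0) are hyperbolic with disjoint axes, then G contains a hyperbolic element, namely (t^{ab}g)(t^{-ab}h) for appropriate g, h ∈ G. -/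
namespace RTreeAux

variable {T : Type*} [MetricSpace T]

noncomputable def gr (w x y : T) : ℝ := (dist w x + dist w y - dist x y) / 2

theorem gr_nonneg (w x y : T) : 0 ≤ gr w x y := by
  have h := dist_triangle x w y
  have c : dist x w = dist w x := dist_comm _ _
  simp only [gr]; linarith

theorem gr_le_left (w x y : T) : gr w x y ≤ dist w x := by
  have h := dist_triangle w x y
  simp only [gr]; linarith

theorem gr_comm (w x y : T) : gr w x y = gr w y x := by
  simp only [gr]; rw [dist_comm x y]; ring

/-- Expansion: `dist x y = dist w x + dist w y - 2 * gr w x y`. -/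
theorem dist_eq_gr (w x y : T) : dist x y = dist w x + dist w y - 2 * gr w x y := by
  simp only [gr]; ring

theorem four_pt (hT : IsRTree T) (w x y z : T) :
    min (gr w x z) (gr w z y) ≤ gr w x y := by
  have h := hT.2 x y z w
  have c1 : dist y w = dist w y := dist_comm _ _
  have c2 : dist z w = dist w z := dist_comm _ _
  have c3 : dist x w = dist w x := dist_comm _ _
  have c4 : dist y z = dist z y := dist_comm _ _
  rcases le_max_iff.1 h with h' | h'
  · exact le_trans (min_le_left _ _) (by simp only [gr]; linarith)
  · exact le_trans (min_le_right _ _) (by simp only [gr]; linarith)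

/-- If one of the two products on the small side is positive, the other is ≤ the big one;
key pivot lemma: if `gr w a b = 0` and `0 < gr w a c` then `gr w c b = 0`. -/
theorem pivot (hT : IsRTree T) {w a b c : T} (h0 : gr w a b = 0) (hpos : 0 < gr w a c) :
    gr w c b = 0 := by
  have h := four_pt hT w a b c
  rw [h0] at h
  rcases min_le_iff.1 h with h' | h'
  · linarith
  · exact le_antisymm h' (gr_nonneg _ _ _)

/-- Median existence. -/
theorem exists_median (hT : IsRTree T) (x y z : T) :
    ∃ m : T, dist x m = gr x y z ∧ dist y m = gr y x z ∧ dist z m = gr z x y := by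
  obtain ⟨f, hf0, hf1, hf⟩ := hT.1 x y
  set t := gr x y z with ht
  have h0 : (0:ℝ) ≤ t := gr_nonneg _ _ _
  have h1 : t ≤ dist x y := gr_le_left _ _ _
  have hxf : dist x (f t) = t := by
    have := hf 0 ⟨le_refl _, dist_nonneg⟩ t ⟨h0, h1⟩
    rw [hf0] at this
    rw [this, abs_of_nonpos (by linarith)]; ring
  have hyf : dist y (f t) = dist x y - t := by
    have := hf (dist x y) ⟨dist_nonneg, le_refl _⟩ t ⟨h0, h1⟩
    rw [hf1] at this
    rw [this, abs_of_nonneg (by linarith)]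
  have c1 : dist y x = dist x y := dist_comm _ _
  have c2 : dist z x = dist x z := dist_comm _ _
  have c3 : dist z y = dist y z := dist_comm _ _
  have htv : t = (dist x y + dist x z - dist y z) / 2 := by rw [ht]; rfl
  refine ⟨f t, hxf, ?_, ?_⟩
  · rw [hyf]; simp only [gr]; linarith
  · have l1 : dist z x ≤ dist z (f t) + dist (f t) x := dist_triangle _ _ _
    have l2 : dist z y ≤ dist z (f t) + dist (f t) y := dist_triangle _ _ _
    have u := hT.2 x y (f t) z
    have c4 : dist (f t) x = t := by rw [dist_comm]; exact hxf
    have c5 : dist (f t) y = dist x y - t := by rw [dist_comm]; exact hyf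
    have c6 : dist x (f t) = t := hxf
    have c7 : dist y (f t) = dist x y - t := hyf
    have c8 : dist (f t) z = dist z (f t) := dist_comm _ _
    rcases le_max_iff.1 u with h' | h' <;>
      · simp only [gr]; linarith

end RTreeAux

namespace RTreeAux2
open RTreeAux
variable {T : Type*} [MetricSpace T]

theorem btw_coords (hT : IsRTree T) {a b y z : T}
    (hy : dist a y + dist y b = dist a b) (hz : dist a z + dist z b = dist a b) :
    dist y z = |dist a y - dist a z| := by
  have c1 : dist y a = dist a y := dist_comm _ _
  have c2 : dist z a = dist a z := dist_comm _ _
  have t1 : dist a y ≤ dist a z + dist z y := dist_triangle _ _ _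
  have t2 : dist a z ≤ dist a y + dist y z := dist_triangle _ _ _
  have c3 : dist z y = dist y z := dist_comm _ _
  refine le_antisymm ?_ (abs_sub_le_iff.2 ⟨by linarith, by linarith⟩)
  rcases le_max_iff.1 (hT.2 y z a b) with h | h
  · calc dist y z ≤ dist a y - dist a z := by linarith
    _ ≤ |dist a y - dist a z| := le_abs_self _
  · calc dist y z ≤ -(dist a y - dist a z) := by linarith
    _ ≤ |dist a y - dist a z| := neg_le_abs _

theorem btw_unique (hT : IsRTree T) {a b y z : T}
    (hy : dist a y + dist y b = dist a b) (hz : dist a z + dist z b = dist a b)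
    (hd : dist a y = dist a z) : y = z := by
  have := btw_coords hT hy hz
  rw [hd, sub_self, abs_zero] at this
  exact dist_eq_zero.1 this

theorem btw_mid (hT : IsRTree T) {l r a b x : T}
    (hy : dist l a + dist a r = dist l r) (hz : dist l b + dist b r = dist l r)
    (hx : dist a x + dist x b = dist a b) :
    dist l x + dist x r = dist l r := by
  have hab : dist a b = |dist l a - dist l b| := btw_coords hT hy hz
  have t1 : dist l x ≤ dist l a + dist a x := dist_triangle _ _ _
  have t2 : dist x r ≤ dist x b + dist b r := dist_triangle _ _ _
  have t1' : dist l x ≤ dist l b + dist b x := dist_triangle _ _ _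
  have t2' : dist x r ≤ dist x a + dist a r := dist_triangle _ _ _
  have t3 : dist l r ≤ dist l x + dist x r := dist_triangle _ _ _
  have c1 : dist b x = dist x b := dist_comm _ _
  have c2 : dist x a = dist a x := dist_comm _ _
  rcases abs_cases (dist l a - dist l b) with ⟨he, _⟩ | ⟨he, _⟩ <;>
    (rw [he] at hab; linarith)

theorem btw_extend (hT : IsRTree T) {x y z w : T}
    (h1 : dist x y + dist y z = dist x z) (h2 : gr z y w = 0) (h3 : 0 < dist y z) :
    dist x z + dist z w = dist x w := by
  have hpos : 0 < gr z y x := by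
    have c1 : dist z y = dist y z := dist_comm _ _
    have c2 : dist z x = dist x z := dist_comm _ _
    have c3 : dist y x = dist x y := dist_comm _ _
    simp only [gr]; linarith
  have h0 : gr z x w = 0 := pivot hT h2 hpos
  have c2 : dist z x = dist x z := dist_comm _ _
  simp only [gr] at h0; linarith

theorem exists_midpoint (hT : IsRTree T) (x y : T) :
    ∃ m : T, dist x m = dist x y / 2 ∧ dist m y = dist x y / 2 := by
  obtain ⟨f, hf0, hf1, hf⟩ := hT.1 x y
  have hd : (0:ℝ) ≤ dist x y := dist_nonneg
  have h0 : (0:ℝ) ≤ dist x y / 2 := by linarith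
  have h1 : dist x y / 2 ≤ dist x y := by linarith
  refine ⟨f (dist x y / 2), ?_, ?_⟩
  · have := hf 0 ⟨le_refl _, hd⟩ (dist x y / 2) ⟨h0, h1⟩
    rw [hf0] at this
    rw [this, abs_of_nonpos (by linarith)]; ring
  · have := hf (dist x y / 2) ⟨h0, h1⟩ (dist x y) ⟨hd, le_refl _⟩
    rw [hf1] at this
    rw [this, abs_of_nonpos (by linarith)]; ring

end RTreeAux2
namespace RTreeAct
open RTreeAux RTreeAux2

variable {T : Type*} [MetricSpace T] {M : Type*} [Group M] [MulAction M T]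

theorem dS (hiso : ∀ m : M, Isometry (fun x : T => m • x)) (g : M) (x y : T) :
    dist (g • x) (g • y) = dist x y := (hiso g).dist_eq x y

theorem grS (hiso : ∀ m : M, Isometry (fun x : T => m • x)) (g : M) (w x y : T) :
    gr (g • w) (g • x) (g • y) = gr w x y := by
  simp only [gr, dS hiso]

theorem tl_le (m : M) (x : T) : translationLength T m ≤ dist x (m • x) :=
  ciInf_le ⟨0, by rintro _ ⟨y, rfl⟩; exact dist_nonneg⟩ x

/-- Existence of an axial point for a hyperbolic isometry of an ℝ-tree. -/
theorem exists_axial (hT : IsRTree T) (hiso : ∀ m : M, Isometry (fun x : T => m • x))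
    {m : M} (h1 : 0 < translationLength T m) :
    ∃ q : T, gr q (m⁻¹ • q) (m • q) = 0 ∧ 0 < dist q (m • q) := by
  cases isEmpty_or_nonempty T with
  | inl h =>
    exfalso
    rw [translationLength, Real.iInf_of_isEmpty] at h1
    exact lt_irrefl 0 h1
  | inr hne =>
  obtain ⟨p⟩ := hne
  obtain ⟨d, hd⟩ : ∃ d : ℝ, dist p (m • p) = d := ⟨_, rfl⟩
  obtain ⟨k, hk⟩ : ∃ k : ℝ, gr p (m⁻¹ • p) (m • p) = k := ⟨_, rfl⟩
  have hk0 : 0 ≤ k := hk ▸ gr_nonneg _ _ _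
  have D1 : dist p (m • p) = d := hd
  have D1' : dist (m • p) p = d := by rw [dist_comm]; exact hd
  have D2 : dist p (m⁻¹ • p) = d := by
    rw [← dS hiso m p (m⁻¹ • p), smul_inv_smul, dist_comm]; exact hd
  have D2' : dist (m⁻¹ • p) p = d := by rw [dist_comm]; exact D2
  have D3 : dist (m⁻¹ • p) (m • p) = 2 * d - 2 * k := by
    simp only [gr] at hk; linarith
  have D3' : dist (m • p) (m⁻¹ • p) = 2 * d - 2 * k := by rw [dist_comm]; exact D3
  have D4 : dist p (m • m • p) = 2 * d - 2 * k := by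
    rw [← dS hiso m (m⁻¹ • p) (m • p), smul_inv_smul] at D3; exact D3
  have D4' : dist (m • m • p) p = 2 * d - 2 * k := by rw [dist_comm]; exact D4
  have D5 : dist (m • p) (m • m • p) = d := by rw [dS hiso m p (m • p)]; exact hd
  have D5' : dist (m • m • p) (m • p) = d := by rw [dist_comm]; exact D5
  by_cases hcase : 2 * k < d
  · -- hyperbolic-like case: construct axial point as the median
    obtain ⟨q, hq1, hq2, hq3⟩ := exists_median hT (m⁻¹ • p) p (m • p)
    have D6 : dist p q = k := by rw [hq2]; exact hk
    have D6' : dist q p = k := by rw [dist_comm]; exact D6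
    have D7 : dist (m⁻¹ • p) q = d - k := by
      rw [hq1]; simp only [gr]; linarith
    have D7' : dist q (m⁻¹ • p) = d - k := by rw [dist_comm]; exact D7
    have D8 : dist (m • p) q = d - k := by
      rw [hq3]; simp only [gr]; linarith
    have D8' : dist q (m • p) = d - k := by rw [dist_comm]; exact D8
    have E2 : gr (m • p) p (m • m • p) = k := by
      have h := grS hiso m p (m⁻¹ • p) (m • p)
      rw [smul_inv_smul] at h
      rw [h]; exact hk
    -- (a1)+(a2): gr (m•p) q (m•m•p) = k, hence dist q (m•m•p) = 2d-3k
    have ha : gr (m • p) q (m • m • p) = k := by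
      have h4 := four_pt hT (m • p) q (m • m • p) p
      have e1 : gr (m • p) q p = d - k := by simp only [gr]; linarith
      rw [e1, E2, min_eq_right (by linarith)] at h4
      have htri : dist p (m • m • p) ≤ dist p q + dist q (m • m • p) := dist_triangle _ _ _
      have high : gr (m • p) q (m • m • p) ≤ k := by simp only [gr]; linarith
      linarith
    have D10 : dist q (m • m • p) = 2 * d - 3 * k := by
      simp only [gr] at ha; linarith
    have D10' : dist (m • m • p) q = 2 * d - 3 * k := by rw [dist_comm]; exact D10
    have D9 : dist (m • p) (m • q) = k := by rw [dS hiso m p q]; exact D6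
    have D9' : dist (m • q) (m • p) = k := by rw [dist_comm]; exact D9
    -- (a3)
    have ha3 : gr (m • p) (m • q) (m • m • p) = k := by
      rw [grS hiso m p q (m • p)]; simp only [gr]; linarith
    -- (a4)+(a5)
    have hgrqq : gr (m • p) q (m • q) = k := by
      have h4 := four_pt hT (m • p) q (m • q) (m • m • p)
      rw [ha, gr_comm (m • p) (m • m • p) (m • q), ha3, min_self] at h4
      have h5 : gr (m • p) q (m • q) ≤ k := by
        have := gr_le_left (m • p) (m • q) q
        rw [gr_comm] at this; linarith
      linarith
    have D11 : dist q (m • q) = d - 2 * k := by simp only [gr] at hgrqq; linarith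
    have D11' : dist (m • q) q = d - 2 * k := by rw [dist_comm]; exact D11
    -- (b)
    have D12 : dist p (m⁻¹ • q) = d - k := by
      rw [← dS hiso m p (m⁻¹ • q), smul_inv_smul]; exact D8
    have D12' : dist (m⁻¹ • q) p = d - k := by rw [dist_comm]; exact D12
    have D13 : dist p (m • q) = d - k := by
      rw [← dS hiso m⁻¹ p (m • q), inv_smul_smul, dist_comm]; exact D7'
    have D13' : dist (m • q) p = d - k := by rw [dist_comm]; exact D13
    have D14 : dist (m⁻¹ • q) (m • p) = 2 * d - 3 * k := by
      rw [← dS hiso m (m⁻¹ • q) (m • p), smul_inv_smul]; exact D10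
    have D14' : dist (m • p) (m⁻¹ • q) = 2 * d - 3 * k := by rw [dist_comm]; exact D14
    have D15 : dist q (m⁻¹ • q) = d - 2 * k := by
      rw [← dS hiso m q (m⁻¹ • q), smul_inv_smul, dist_comm]; exact D11
    have hb1 : gr p (m • q) (m • p) = d - k := by simp only [gr]; linarith
    have hb2 : gr p (m⁻¹ • q) (m • p) = k := by simp only [gr]; linarith
    have hb3 : gr p (m⁻¹ • q) (m • q) ≤ k := by
      have h4 := four_pt hT p (m⁻¹ • q) (m • p) (m • q)
      rw [hb2, hb1] at h4
      rcases min_le_iff.1 h4 with h' | h'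
      · exact h'
      · linarith
    have hfinal : gr q (m⁻¹ • q) (m • q) ≤ 0 := by
      simp only [gr] at hb3 ⊢
      linarith
    exact ⟨q, le_antisymm hfinal (gr_nonneg _ _ _), by rw [D11]; linarith⟩
  · -- elliptic case: contradiction with positivity of translation length
    exfalso
    push_neg at hcase
    rcases eq_or_lt_of_le (dist_nonneg.trans_eq hd) with hd0 | hd0
    · have := tl_le m p
      rw [hd, ← hd0] at this
      linarith
    obtain ⟨w, hw1, hw2⟩ := exists_midpoint hT p (m • p)
    rw [hd] at hw1 hw2
    have W1 : dist p w = d / 2 := hw1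
    have W1' : dist w p = d / 2 := by rw [dist_comm]; exact hw1
    have W2 : dist w (m • p) = d / 2 := hw2
    have W2' : dist (m • p) w = d / 2 := by rw [dist_comm]; exact hw2
    have W3 : dist (m • p) (m • w) = d / 2 := by rw [dS hiso m p w]; exact W1
    have W3' : dist (m • w) (m • p) = d / 2 := by rw [dist_comm]; exact W3
    have hc1 : d / 2 ≤ gr (m • p) p (m • w) := by
      have h4 := four_pt hT (m • p) p (m • w) (m • m • p)
      have e1 : gr (m • p) p (m • m • p) = k := by simp only [gr]; linarith
      have e2 : gr (m • p) (m • m • p) (m • w) = d / 2 := by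
        rw [grS hiso m p (m • p) w]; simp only [gr]; linarith
      rw [e1, e2, min_eq_right (by linarith)] at h4
      linarith
    have hc2 : d / 2 ≤ gr (m • p) w (m • w) := by
      have h4 := four_pt hT (m • p) w (m • w) p
      have e1 : gr (m • p) w p = d / 2 := by simp only [gr]; linarith
      rw [e1] at h4
      have := le_trans (le_min (le_refl (d/2)) hc1) h4
      linarith
    have hc3 : dist w (m • w) ≤ 0 := by
      simp only [gr] at hc2; linarith
    have := tl_le m w
    linarith
end RTreeAct
namespace RTreeAct
open RTreeAux RTreeAux2
set_option linter.unusedSectionVars false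
variable {T : Type*} [MetricSpace T] {M : Type*} [Group M] [MulAction M T]

theorem key_add (m : M) (i j : ℤ) (q : T) : (m ^ i) • ((m ^ j) • q) = (m ^ (i + j)) • q := by
  rw [smul_smul, ← zpow_add]

theorem line_nat (hT : IsRTree T) (hiso : ∀ m : M, Isometry (fun x : T => m • x))
    {m : M} {q : T} (hax : gr q (m⁻¹ • q) (m • q) = 0) :
    ∀ n : ℕ, dist q ((m ^ (n : ℤ)) • q) = n * dist q (m • q) := by
  intro n
  induction n using Nat.twoStepInduction with
  | zero => simp
  | one => simp
  | more n ih ih1 =>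
    set ℓ := dist q (m • q) with hℓ
    set i : ℤ := (n : ℤ) with hi
    have e1 : (m ^ (i+1)) • (m • q) = (m ^ (i+2)) • q := by
      rw [show m • q = (m ^ (1:ℤ)) • q by simp, key_add]; congr 1 <;> ring
    have e2 : (m ^ (i+1)) • (m⁻¹ • q) = (m ^ i) • q := by
      rw [show m⁻¹ • q = (m ^ (-1:ℤ)) • q by simp, key_add]; congr 1 <;> ring
    have F1 : dist ((m ^ (i+1)) • q) ((m ^ (i+2)) • q) = ℓ := by
      rw [← e1, dS hiso]
    have F0 : gr ((m ^ (i+1)) • q) ((m ^ i) • q) ((m ^ (i+2)) • q) = 0 := by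
      rw [← e1, ← e2, grS hiso]; exact hax
    have dq1 : dist q ((m ^ (i+1)) • q) = (n+1) * ℓ := by
      have h := ih1
      have : ((n+1 : ℕ) : ℤ) = i + 1 := by push_cast; ring
      rw [this] at h
      rw [h]; push_cast; ring
    have dqi : dist q ((m ^ i) • q) = n * ℓ := ih
    have d1i : dist ((m ^ (i+1)) • q) ((m ^ i) • q) = ℓ := by
      have e3 : (m ^ i) • (m • q) = (m ^ (i+1)) • q := by
        rw [show m • q = (m ^ (1:ℤ)) • q by simp, key_add]
      rw [← e3, dS hiso, dist_comm]
    have F2 : gr ((m ^ (i+1)) • q) ((m ^ i) • q) q = ℓ := by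
      simp only [gr]
      rw [d1i, dist_comm ((m ^ (i+1)) • q) q, dq1, dist_comm ((m ^ i) • q) q, dqi]
      ring
    have cast2 : ((n+2 : ℕ) : ℤ) = i + 2 := by push_cast; ring
    rw [cast2]
    by_cases hℓ0 : 0 < ℓ
    · have hpiv := pivot hT F0 (F2 ▸ hℓ0)
      simp only [gr] at hpiv
      rw [dist_comm ((m ^ (i+1)) • q) q, dq1, F1] at hpiv
      push_cast
      linarith
    · have hℓe : ℓ = 0 := le_antisymm (not_lt.1 hℓ0) (hℓ ▸ dist_nonneg)
      have t := dist_triangle q ((m ^ (i+1)) • q) ((m ^ (i+2)) • q)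
      rw [dq1, F1] at t
      have := dist_nonneg (x := q) (y := (m ^ (i+2)) • q)
      push_cast
      rw [hℓe] at *
      linarith

theorem line_z (hT : IsRTree T) (hiso : ∀ m : M, Isometry (fun x : T => m • x))
    {m : M} {q : T} (hax : gr q (m⁻¹ • q) (m • q) = 0) :
    ∀ c : ℤ, dist q ((m ^ c) • q) = |(c : ℝ)| * dist q (m • q) := by
  intro c
  rcases le_or_gt 0 c with hc | hc
  · lift c to ℕ using hc
    rw [line_nat hT hiso hax c, abs_of_nonneg (by positivity)]
    push_cast; ring
  · have e1 : (m ^ (-c)) • ((m ^ c) • q) = q := by rw [key_add]; simp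
    have h1 : dist q ((m ^ c) • q) = dist ((m ^ (-c)) • q) q := by
      rw [← dS hiso (m ^ (-c)) q ((m ^ c) • q), e1]
    have hnc : ((-c).toNat : ℤ) = -c := Int.toNat_of_nonneg (by omega)
    have h2 : dist q ((m ^ (((-c).toNat : ℕ) : ℤ)) • q) = ((-c).toNat : ℝ) * dist q (m • q) :=
      line_nat hT hiso hax (-c).toNat
    rw [hnc] at h2
    have hcast : ((-c).toNat : ℝ) = -(c : ℝ) := by
      have := congrArg (fun z : ℤ => (z : ℝ)) hnc
      push_cast at this
      linarith [this]
    rw [h1, dist_comm, h2, hcast, abs_of_neg (by exact_mod_cast hc)]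

theorem line_dist (hT : IsRTree T) (hiso : ∀ m : M, Isometry (fun x : T => m • x))
    {m : M} {q : T} (hax : gr q (m⁻¹ • q) (m • q) = 0) (i j : ℤ) :
    dist ((m ^ i) • q) ((m ^ j) • q) = |(j : ℝ) - (i : ℝ)| * dist q (m • q) := by
  have e1 : (m ^ (-i)) • ((m ^ i) • q) = q := by rw [key_add]; simp
  have e2 : (m ^ (-i)) • ((m ^ j) • q) = (m ^ (j - i)) • q := by
    rw [key_add]; congr 1; ring
  rw [← dS hiso (m ^ (-i)) ((m ^ i) • q) ((m ^ j) • q), e1, e2, line_z hT hiso hax (j - i)]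
  congr 2
  push_cast; ring
end RTreeAct
namespace RTreeAct
open RTreeAux RTreeAux2
variable {T : Type*} [MetricSpace T] {M : Type*} [Group M] [MulAction M T]

theorem step_lemma (hT : IsRTree T) (hiso : ∀ m : M, Isometry (fun x : T => m • x))
    {m : M} {q : T} (hax : gr q (m⁻¹ • q) (m • q) = 0) (x : T) (i j : ℤ)
    (h1 : dist x q < |(i:ℝ)| * dist q (m • q))
    (h2 : |(j:ℝ)| = |(i:ℝ)| + 1) (h3 : |(j:ℝ) - (i:ℝ)| = 1) :
    dist x ((m ^ j) • q) = dist x ((m ^ i) • q) + dist q (m • q) := by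
  set ℓ := dist q (m • q) with hℓdef
  have d1 : dist q ((m ^ i) • q) = |(i:ℝ)| * ℓ := line_z hT hiso hax i
  have d1' : dist ((m ^ i) • q) q = |(i:ℝ)| * ℓ := by rw [dist_comm]; exact d1
  have d2 : dist q ((m ^ j) • q) = (|(i:ℝ)| + 1) * ℓ := by
    rw [line_z hT hiso hax j, h2]
  have d3 : dist ((m ^ i) • q) ((m ^ j) • q) = ℓ := by
    rw [line_dist hT hiso hax i j, h3, one_mul]
  have h0 : gr ((m ^ i) • q) q ((m ^ j) • q) = 0 := by
    simp only [gr]; rw [d1', d2, d3]; ring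
  have htr : dist q ((m ^ i) • q) ≤ dist q x + dist x ((m ^ i) • q) := dist_triangle _ _ _
  have cqx : dist q x = dist x q := dist_comm _ _
  have cix : dist ((m ^ i) • q) x = dist x ((m ^ i) • q) := dist_comm _ _
  have hp : 0 < gr ((m ^ i) • q) q x := by
    simp only [gr]; rw [d1', cix, cqx]; rw [d1, cqx] at htr; linarith
  have hfin := pivot hT h0 hp
  simp only [gr] at hfin
  rw [cix, d3] at hfin
  linarith

theorem step_pos (hT : IsRTree T) (hiso : ∀ m : M, Isometry (fun x : T => m • x))
    {m : M} {q : T} (hax : gr q (m⁻¹ • q) (m • q) = 0) (x : T) (i : ℤ) (hi : 0 ≤ i)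
    (h1 : dist x q < (i:ℝ) * dist q (m • q)) :
    dist x ((m ^ (i+1)) • q) = dist x ((m ^ i) • q) + dist q (m • q) := by
  have hci : |(i:ℝ)| = (i:ℝ) := abs_of_nonneg (by exact_mod_cast hi)
  have hi' : (0:ℝ) ≤ (i:ℝ) := by exact_mod_cast hi
  refine step_lemma hT hiso hax x i (i+1) (by rw [hci]; exact h1) ?_ ?_
  · push_cast
    rw [hci, abs_of_nonneg (by linarith)]
  · push_cast
    rw [show (i:ℝ) + 1 - (i:ℝ) = 1 by ring]
    norm_num

theorem step_neg (hT : IsRTree T) (hiso : ∀ m : M, Isometry (fun x : T => m • x))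
    {m : M} {q : T} (hax : gr q (m⁻¹ • q) (m • q) = 0) (x : T) (i : ℤ) (hi : 0 ≤ i)
    (h1 : dist x q < (i:ℝ) * dist q (m • q)) :
    dist x ((m ^ (-i-1)) • q) = dist x ((m ^ (-i)) • q) + dist q (m • q) := by
  have hci : |((-i : ℤ):ℝ)| = (i:ℝ) := by
    push_cast; rw [abs_neg, abs_of_nonneg (by exact_mod_cast hi)]
  have hi' : (0:ℝ) ≤ (i:ℝ) := by exact_mod_cast hi
  refine step_lemma hT hiso hax x (-i) (-i-1) (by rw [hci]; exact h1) ?_ ?_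
  · push_cast at hci ⊢
    rw [hci, show -(i:ℝ) - 1 = -((i:ℝ)+1) by ring, abs_neg,
      abs_of_nonneg (by linarith)]
  · push_cast
    rw [show -(i:ℝ) - 1 - -(i:ℝ) = -1 by ring]
    norm_num

theorem disp (hT : IsRTree T) (hiso : ∀ m : M, Isometry (fun x : T => m • x))
    {m : M} {q : T} (hax : gr q (m⁻¹ • q) (m • q) = 0) (hpos : 0 < dist q (m • q)) (x : T) :
    (∀ n : ℕ, 1 ≤ n → dist x ((m ^ (n : ℤ)) • x) =
        n * dist q (m • q) + (dist x (m • x) - dist q (m • q))) ∧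
    (∀ N : ℤ, 0 ≤ N → dist x q < N * dist q (m • q) →
        dist x ((m ^ (-N)) • q) + dist x ((m ^ N) • q) =
        2 * N * dist q (m • q) + (dist x (m • x) - dist q (m • q))) := by
  set ℓ := dist q (m • q) with hℓdef
  have hover : ∀ N' : ℤ, 0 ≤ N' → dist x q < N' * ℓ → ∀ k : ℕ,
      dist x ((m ^ (N' + (k:ℤ))) • q) = dist x ((m ^ N') • q) + k * ℓ ∧
      dist x ((m ^ (-(N' + (k:ℤ)))) • q) = dist x ((m ^ (-N')) • q) + k * ℓ := by
    intro N' hN0 hNt k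
    induction k with
    | zero => simp
    | succ k ih =>
      obtain ⟨ih1, ih2⟩ := ih
      have hik : (0:ℤ) ≤ N' + (k:ℤ) := by positivity
      have hthr : dist x q < ((N' + (k:ℤ) : ℤ):ℝ) * ℓ := by
        have h2 : ((N':ℤ):ℝ) * ℓ ≤ ((N' + (k:ℤ) : ℤ):ℝ) * ℓ := by
          apply mul_le_mul_of_nonneg_right _ (le_of_lt hpos)
          push_cast; linarith [Nat.cast_nonneg (α := ℝ) k]
        linarith
      constructor
      · have hstep := step_pos hT hiso hax x (N' + (k:ℤ)) hik hthr
        have ecast : N' + ((k+1 : ℕ) : ℤ) = N' + (k:ℤ) + 1 := by push_cast; ring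
        rw [ecast, hstep, ih1]
        push_cast; ring
      · have hstep := step_neg hT hiso hax x (N' + (k:ℤ)) hik hthr
        have ecast : -(N' + ((k+1 : ℕ) : ℤ)) = -(N' + (k:ℤ)) - 1 := by push_cast; ring
        rw [ecast, hstep, ih2]
        push_cast; ring
  obtain ⟨n₀, hn₀⟩ := exists_nat_gt (dist x q / ℓ)
  have hthr0 : dist x q < ((n₀:ℤ):ℝ) * ℓ := by
    rw [div_lt_iff₀ hpos] at hn₀; push_cast; linarith
  have hN₀0 : (0:ℤ) ≤ (n₀:ℤ) := by positivity
  have main : ∀ n : ℕ, 1 ≤ n → dist x ((m ^ (n : ℤ)) • x) =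
      n * ℓ + (dist x ((m ^ (-(n₀:ℤ))) • q) + dist x ((m ^ ((n₀:ℤ))) • q) - 2 * n₀ * ℓ) := by
    intro n hn
    have dxB : dist x ((m ^ ((n₀:ℤ) + (n:ℤ))) • q) = dist x ((m ^ ((n₀:ℤ))) • q) + n * ℓ :=
      (hover (n₀:ℤ) hN₀0 hthr0 n).1
    have e1 : (m ^ (-(n:ℤ))) • ((m ^ (n:ℤ)) • x) = x := by rw [key_add]; simp
    have e2 : (m ^ (-(n:ℤ))) • ((m ^ (-(n₀:ℤ))) • q) = (m ^ (-((n₀:ℤ) + (n:ℤ)))) • q := by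
      rw [key_add]; congr 1; ring
    have e3 : (m ^ (-(n:ℤ))) • ((m ^ ((n₀:ℤ) + (n:ℤ))) • q) = (m ^ ((n₀:ℤ))) • q := by
      rw [key_add]; congr 1; ring
    have dyA : dist ((m ^ (n:ℤ)) • x) ((m ^ (-(n₀:ℤ))) • q) =
        dist x ((m ^ (-(n₀:ℤ))) • q) + n * ℓ := by
      rw [← dS hiso (m ^ (-(n:ℤ))) ((m ^ (n:ℤ)) • x) ((m ^ (-(n₀:ℤ))) • q), e1, e2]
      exact (hover (n₀:ℤ) hN₀0 hthr0 n).2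
    have dyB : dist ((m ^ (n:ℤ)) • x) ((m ^ ((n₀:ℤ) + (n:ℤ))) • q) =
        dist x ((m ^ ((n₀:ℤ))) • q) := by
      rw [← dS hiso (m ^ (-(n:ℤ))) ((m ^ (n:ℤ)) • x) ((m ^ ((n₀:ℤ) + (n:ℤ))) • q), e1, e3]
    have dAB : dist ((m ^ (-(n₀:ℤ))) • q) ((m ^ ((n₀:ℤ) + (n:ℤ))) • q) =
        ((n:ℝ) + 2 * n₀) * ℓ := by
      rw [line_dist hT hiso hax]
      congr 1
      push_cast
      rw [show (n₀:ℝ) + n - -(n₀:ℝ) = (n:ℝ) + 2*n₀ by ring,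
        abs_of_nonneg (by positivity)]
    have hn1 : (1:ℝ) ≤ (n:ℝ) := by exact_mod_cast hn
    have hnl : ℓ ≤ (n:ℝ) * ℓ := by nlinarith
    have upper := hT.2 x ((m ^ (n:ℤ)) • x) ((m ^ (-(n₀:ℤ))) • q) ((m ^ ((n₀:ℤ) + (n:ℤ))) • q)
    have lower := hT.2 x ((m ^ ((n₀:ℤ) + (n:ℤ))) • q) ((m ^ (n:ℤ)) • x) ((m ^ (-(n₀:ℤ))) • q)
    rw [dyA, dyB, dAB] at upper
    have cBA : dist ((m ^ ((n₀:ℤ) + (n:ℤ))) • q) ((m ^ (-(n₀:ℤ))) • q) = ((n:ℝ) + 2 * n₀) * ℓ := by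
      rw [dist_comm]; exact dAB
    have cBy : dist ((m ^ ((n₀:ℤ) + (n:ℤ))) • q) ((m ^ (n:ℤ)) • x) =
        dist x ((m ^ ((n₀:ℤ))) • q) := by rw [dist_comm]; exact dyB
    rw [dxB, cBA, cBy, dyA] at lower
    have hup : dist x ((m ^ (n:ℤ)) • x) ≤
        (n:ℝ) * ℓ + (dist x ((m ^ (-(n₀:ℤ))) • q) + dist x ((m ^ ((n₀:ℤ))) • q) - 2 * n₀ * ℓ) := by
      rcases le_max_iff.1 upper with h | h <;> linarith
    have hlo : (n:ℝ) * ℓ + (dist x ((m ^ (-(n₀:ℤ))) • q) + dist x ((m ^ ((n₀:ℤ))) • q)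
        - 2 * n₀ * ℓ) ≤ dist x ((m ^ (n:ℤ)) • x) := by
      rcases le_max_iff.1 lower with h | h <;> linarith
    linarith
  have hC : dist x ((m ^ (-(n₀:ℤ))) • q) + dist x ((m ^ ((n₀:ℤ))) • q) - 2 * n₀ * ℓ =
      dist x (m • x) - ℓ := by
    have h1 := main 1 (le_refl 1)
    rw [show ((1:ℕ):ℤ) = (1:ℤ) by norm_num, zpow_one] at h1
    push_cast at h1
    linarith
  constructor
  · intro n hn
    rw [main n hn, hC]
  · intro N hN0 hNthr
    rcases le_total N (n₀:ℤ) with hle | hle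
    · obtain ⟨k, hk⟩ : ∃ k : ℕ, (n₀:ℤ) = N + k :=
        ⟨(n₀ - N).toNat, by rw [Int.toNat_of_nonneg (by omega)]; ring⟩
      obtain ⟨e1, e2⟩ := hover N hN0 hNthr k
      rw [← hk] at e1 e2
      have hkr : ((k:ℤ):ℝ) = (n₀:ℝ) - (N:ℝ) := by
        have := congrArg (fun z : ℤ => (z:ℝ)) hk
        push_cast at this ⊢
        linarith
      push_cast at hkr e1 e2 hC ⊢
      have hterm : (k:ℝ) * ℓ = (n₀:ℝ) * ℓ - (N:ℝ) * ℓ := by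
        rw [hkr]; ring
      linarith
    · obtain ⟨k, hk⟩ : ∃ k : ℕ, N = (n₀:ℤ) + k :=
        ⟨(N - n₀).toNat, by rw [Int.toNat_of_nonneg (by omega)]; ring⟩
      obtain ⟨e1, e2⟩ := hover (n₀:ℤ) hN₀0 hthr0 k
      rw [← hk] at e1 e2
      have hkr : ((k:ℤ):ℝ) = (N:ℝ) - (n₀:ℝ) := by
        have := congrArg (fun z : ℤ => (z:ℝ)) hk
        push_cast at this ⊢
        linarith
      push_cast at hkr e1 e2 hC ⊢
      have hterm : (k:ℝ) * ℓ = (N:ℝ) * ℓ - (n₀:ℝ) * ℓ := by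
        rw [hkr]; ring
      linarith
end RTreeAct
namespace RTreeAct
open RTreeAux RTreeAux2
variable {T : Type*} [MetricSpace T] {M : Type*} [Group M] [MulAction M T]

/-- The infimum displacement is attained at an axial point. -/
theorem disp_lower (hT : IsRTree T) (hiso : ∀ m : M, Isometry (fun x : T => m • x))
    {m : M} {q : T} (hax : gr q (m⁻¹ • q) (m • q) = 0) (hpos : 0 < dist q (m • q)) (x : T) :
    dist q (m • q) ≤ dist x (m • x) := by
  set ℓ := dist q (m • q) with hℓ
  obtain ⟨n₀, hn₀⟩ := exists_nat_gt (dist x q / ℓ)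
  have hthr : dist x q < ((n₀:ℤ):ℝ) * ℓ := by
    rw [div_lt_iff₀ hpos] at hn₀; push_cast; linarith
  have h2 := (disp hT hiso hax hpos x).2 (n₀:ℤ) (by positivity) hthr
  have htr : dist ((m ^ (-(n₀:ℤ))) • q) ((m ^ ((n₀:ℤ))) • q) ≤
      dist ((m ^ (-(n₀:ℤ))) • q) x + dist x ((m ^ ((n₀:ℤ))) • q) := dist_triangle _ _ _
  have hAB : dist ((m ^ (-(n₀:ℤ))) • q) ((m ^ ((n₀:ℤ))) • q) = 2 * ((n₀:ℤ):ℝ) * ℓ := by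
    rw [line_dist hT hiso hax]
    rw [show ((n₀:ℤ):ℝ) - ((-(n₀:ℤ) : ℤ):ℝ) = 2 * ((n₀:ℤ):ℝ) by push_cast; ring]
    rw [abs_of_nonneg (by positivity)]
  have hc : dist ((m ^ (-(n₀:ℤ))) • q) x = dist x ((m ^ (-(n₀:ℤ))) • q) := dist_comm _ _
  push_cast at h2 hAB ⊢
  linarith

theorem tl_eq (hT : IsRTree T) (hiso : ∀ m : M, Isometry (fun x : T => m • x))
    {m : M} {q : T} (hax : gr q (m⁻¹ • q) (m • q) = 0) (hpos : 0 < dist q (m • q)) :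
    translationLength T m = dist q (m • q) := by
  haveI : Nonempty T := ⟨q⟩
  exact le_antisymm (tl_le m q) (le_ciInf (disp_lower hT hiso hax hpos))

theorem mem_axis_iff (hT : IsRTree T) (hiso : ∀ m : M, Isometry (fun x : T => m • x))
    {m : M} {q : T} (hax : gr q (m⁻¹ • q) (m • q) = 0) (hpos : 0 < dist q (m • q)) (x : T) :
    x ∈ axisSet T m ↔ dist x (m • x) = dist q (m • q) := by
  rw [axisSet, Set.mem_setOf_eq, tl_eq hT hiso hax hpos]

/-- `q` is axial for `m ^ n`, `n ≥ 1`, with displacement `n * ℓ`. -/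
theorem axial_pow (hT : IsRTree T) (hiso : ∀ m : M, Isometry (fun x : T => m • x))
    {m : M} {q : T} (hax : gr q (m⁻¹ • q) (m • q) = 0) (hpos : 0 < dist q (m • q))
    (n : ℕ) (hn : 1 ≤ n) :
    gr q ((m ^ (n:ℤ))⁻¹ • q) ((m ^ (n:ℤ)) • q) = 0 ∧
      dist q ((m ^ (n:ℤ)) • q) = n * dist q (m • q) := by
  set ℓ := dist q (m • q) with hℓ
  have hval : dist q ((m ^ (n:ℤ)) • q) = n * ℓ := by
    rw [line_z hT hiso hax (n:ℤ)]
    rw [abs_of_nonneg (by positivity)]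
    norm_cast
  have hvalneg : dist q ((m ^ (-(n:ℤ))) • q) = n * ℓ := by
    rw [line_z hT hiso hax (-(n:ℤ))]
    rw [show ((-(n:ℤ) : ℤ):ℝ) = -((n:ℕ):ℝ) by push_cast; ring, abs_neg,
      abs_of_nonneg (by positivity)]
  have hee : dist ((m ^ (-(n:ℤ))) • q) ((m ^ ((n:ℤ))) • q) = 2 * n * ℓ := by
    rw [line_dist hT hiso hax]
    rw [show ((n:ℤ):ℝ) - ((-(n:ℤ) : ℤ):ℝ) = 2 * ((n:ℕ):ℝ) by push_cast; ring]
    rw [abs_of_nonneg (by positivity)]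
  constructor
  · rw [← zpow_neg]
    simp only [gr]
    rw [hval, hvalneg, hee]; ring
  · exact hval

theorem tl_pow_nat (hT : IsRTree T) (hiso : ∀ m : M, Isometry (fun x : T => m • x))
    {m : M} {q : T} (hax : gr q (m⁻¹ • q) (m • q) = 0) (hpos : 0 < dist q (m • q))
    (n : ℕ) (hn : 1 ≤ n) :
    translationLength T (m ^ (n:ℤ)) = n * dist q (m • q) ∧
      axisSet T (m ^ (n:ℤ)) = axisSet T m := by
  obtain ⟨hax', hval⟩ := axial_pow hT hiso hax hpos n hn
  have hn1 : (1:ℝ) ≤ (n:ℝ) := by exact_mod_cast hn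
  have hpos' : 0 < dist q ((m ^ (n:ℤ)) • q) := by rw [hval]; nlinarith
  have htl : translationLength T (m ^ (n:ℤ)) = n * dist q (m • q) := by
    rw [tl_eq hT hiso hax' hpos', hval]
  refine ⟨htl, ?_⟩
  ext x
  rw [mem_axis_iff hT hiso hax' hpos' x, mem_axis_iff hT hiso hax hpos x, hval]
  have hform := (disp hT hiso hax hpos x).1 n hn
  constructor
  · intro hx
    rw [hform] at hx
    linarith
  · intro hx
    rw [hform, hx]
    ring

theorem disp_inv (hiso : ∀ m : M, Isometry (fun x : T => m • x)) (m : M) (x : T) :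
    dist x (m⁻¹ • x) = dist x (m • x) := by
  rw [← dS hiso m x (m⁻¹ • x), smul_inv_smul, dist_comm]

theorem tl_inv (hiso : ∀ m : M, Isometry (fun x : T => m • x)) (m : M) :
    translationLength T m⁻¹ = translationLength T m := by
  unfold translationLength
  exact iInf_congr (fun x => disp_inv hiso m x)

theorem axis_inv (hiso : ∀ m : M, Isometry (fun x : T => m • x)) (m : M) :
    axisSet T m⁻¹ = axisSet T m := by
  unfold axisSet
  ext x
  rw [Set.mem_setOf_eq, Set.mem_setOf_eq, disp_inv hiso m x, tl_inv hiso m]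

/-- Powers of a hyperbolic element are hyperbolic with the same axis. -/
theorem tl_zpow (hT : IsRTree T) (hiso : ∀ m : M, Isometry (fun x : T => m • x))
    {m : M} (h1 : 0 < translationLength T m) (c : ℤ) (hc : c ≠ 0) :
    0 < translationLength T (m ^ c) ∧ axisSet T (m ^ c) = axisSet T m := by
  obtain ⟨q, hax, hpos⟩ := exists_axial hT hiso h1
  have htl := tl_eq hT hiso hax hpos
  rcases lt_or_gt_of_ne hc with hneg | hposc
  · have hcn : ((-c).toNat : ℤ) = -c := Int.toNat_of_nonneg (by omega)
    have hn1 : 1 ≤ (-c).toNat := by omega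
    obtain ⟨e1, e2⟩ := tl_pow_nat hT hiso hax hpos (-c).toNat hn1
    rw [hcn] at e1 e2
    have hinv : m ^ c = (m ^ (-c))⁻¹ := by rw [← zpow_neg, neg_neg]
    constructor
    · rw [hinv, tl_inv hiso, e1]
      have : (1:ℝ) ≤ (((-c).toNat : ℕ):ℝ) := by exact_mod_cast hn1
      nlinarith
    · rw [hinv, axis_inv hiso, e2]
  · have hcn : (c.toNat : ℤ) = c := Int.toNat_of_nonneg (by omega)
    have hn1 : 1 ≤ c.toNat := by omega
    obtain ⟨e1, e2⟩ := tl_pow_nat hT hiso hax hpos c.toNat hn1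
    rw [hcn] at e1 e2
    constructor
    · rw [e1]
      have : (1:ℝ) ≤ ((c.toNat : ℕ):ℝ) := by exact_mod_cast hn1
      nlinarith
    · exact e2
end RTreeAct
namespace RTreeAct
open RTreeAux RTreeAux2
variable {T : Type*} [MetricSpace T] {M : Type*} [Group M] [MulAction M T]

theorem axis_smul_mem (hiso : ∀ m : M, Isometry (fun x : T => m • x)) {m : M} {x : T}
    (hx : x ∈ axisSet T m) : m • x ∈ axisSet T m := by
  simp only [axisSet, Set.mem_setOf_eq] at hx ⊢
  rw [dS hiso m x (m • x)]; exact hx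

theorem axis_inv_smul_mem (hiso : ∀ m : M, Isometry (fun x : T => m • x)) {m : M} {x : T}
    (hx : x ∈ axisSet T m) : m⁻¹ • x ∈ axisSet T m := by
  simp only [axisSet, Set.mem_setOf_eq] at hx ⊢
  rw [smul_inv_smul, ← dS hiso m (m⁻¹ • x) x, smul_inv_smul]
  exact hx

theorem q_mem_axis (hT : IsRTree T) (hiso : ∀ m : M, Isometry (fun x : T => m • x))
    {m : M} {q : T} (hax : gr q (m⁻¹ • q) (m • q) = 0) (hpos : 0 < dist q (m • q)) :
    q ∈ axisSet T m := by
  rw [mem_axis_iff hT hiso hax hpos]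

theorem line_mem (hT : IsRTree T) (hiso : ∀ m : M, Isometry (fun x : T => m • x))
    {m : M} {q : T} (hax : gr q (m⁻¹ • q) (m • q) = 0) (hpos : 0 < dist q (m • q))
    (i : ℤ) : (m ^ i) • q ∈ axisSet T m := by
  rw [mem_axis_iff hT hiso hax hpos]
  have e : m • ((m ^ i) • q) = (m ^ (1 + i)) • q := by
    rw [smul_smul]; congr 1; group
  rw [e, line_dist hT hiso hax i (1 + i)]
  rw [show ((1 + i : ℤ):ℝ) - (i:ℝ) = 1 by push_cast; ring, abs_one, one_mul]

theorem axis_dist_lower (hT : IsRTree T) (hiso : ∀ m : M, Isometry (fun x : T => m • x))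
    {m : M} {q : T} (hax : gr q (m⁻¹ • q) (m • q) = 0) (hpos : 0 < dist q (m • q))
    (x : T) {y : T} (hy : y ∈ axisSet T m) :
    (dist x (m • x) - dist q (m • q)) / 2 ≤ dist x y := by
  rw [mem_axis_iff hT hiso hax hpos] at hy
  have t1 : dist x (m • x) ≤ dist x y + dist y (m • x) := dist_triangle _ _ _
  have t2 : dist y (m • x) ≤ dist y (m • y) + dist (m • y) (m • x) := dist_triangle _ _ _
  have t3 : dist (m • y) (m • x) = dist x y := by rw [dS hiso, dist_comm]
  linarith

theorem convex_axis (hT : IsRTree T) (hiso : ∀ m : M, Isometry (fun x : T => m • x))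
    {m : M} {q : T} (hax : gr q (m⁻¹ • q) (m • q) = 0) (hpos : 0 < dist q (m • q))
    {a b x : T} (ha : a ∈ axisSet T m) (hb : b ∈ axisSet T m)
    (hx : dist a x + dist x b = dist a b) : x ∈ axisSet T m := by
  set ℓ := dist q (m • q) with hℓ
  obtain ⟨n₀, hn₀⟩ := exists_nat_gt (max (dist a q) (max (dist b q) (dist x q)) / ℓ)
  have hth : max (dist a q) (max (dist b q) (dist x q)) < ((n₀:ℤ):ℝ) * ℓ := by
    rw [div_lt_iff₀ hpos] at hn₀; push_cast; linarith
  have htha : dist a q < ((n₀:ℤ):ℝ) * ℓ := lt_of_le_of_lt (le_max_left _ _) hth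
  have hthb : dist b q < ((n₀:ℤ):ℝ) * ℓ :=
    lt_of_le_of_lt (le_trans (le_max_left _ _) (le_max_right _ _)) hth
  have hthx : dist x q < ((n₀:ℤ):ℝ) * ℓ :=
    lt_of_le_of_lt (le_trans (le_max_right _ _) (le_max_right _ _)) hth
  have hN0 : (0:ℤ) ≤ (n₀:ℤ) := by positivity
  have hAB : dist ((m ^ (-(n₀:ℤ))) • q) ((m ^ ((n₀:ℤ))) • q) = 2 * (n₀:ℝ) * ℓ := by
    rw [line_dist hT hiso hax]
    rw [show ((n₀:ℤ):ℝ) - ((-(n₀:ℤ) : ℤ):ℝ) = 2 * ((n₀:ℕ):ℝ) by push_cast; ring]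
    rw [abs_of_nonneg (by positivity)]
  have h2a := (disp hT hiso hax hpos a).2 (n₀:ℤ) hN0 htha
  have h2b := (disp hT hiso hax hpos b).2 (n₀:ℤ) hN0 hthb
  have h2x := (disp hT hiso hax hpos x).2 (n₀:ℤ) hN0 hthx
  rw [(mem_axis_iff hT hiso hax hpos a).1 ha] at h2a
  rw [(mem_axis_iff hT hiso hax hpos b).1 hb] at h2b
  have ca : dist ((m ^ (-(n₀:ℤ))) • q) a = dist a ((m ^ (-(n₀:ℤ))) • q) := dist_comm _ _
  have cb : dist ((m ^ (-(n₀:ℤ))) • q) b = dist b ((m ^ (-(n₀:ℤ))) • q) := dist_comm _ _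
  have cx : dist ((m ^ (-(n₀:ℤ))) • q) x = dist x ((m ^ (-(n₀:ℤ))) • q) := dist_comm _ _
  have hbtw := btw_mid hT (l := (m ^ (-(n₀:ℤ))) • q) (r := (m ^ ((n₀:ℤ))) • q)
    (a := a) (b := b) (x := x)
    (by rw [ca, hAB]; push_cast at h2a ⊢; linarith)
    (by rw [cb, hAB]; push_cast at h2b ⊢; linarith)
    hx
  rw [cx, hAB] at hbtw
  rw [mem_axis_iff hT hiso hax hpos]
  push_cast at h2x hbtw ⊢
  linarith

theorem gate_exists (hT : IsRTree T) (hiso : ∀ m : M, Isometry (fun x : T => m • x))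
    {m : M} {q : T} (hax : gr q (m⁻¹ • q) (m • q) = 0) (hpos : 0 < dist q (m • q))
    (x : T) :
    ∃ p : T, p ∈ axisSet T m ∧ ∀ a ∈ axisSet T m, dist x p + dist p a = dist x a := by
  set ℓ := dist q (m • q) with hℓ
  obtain ⟨n₀, hn₀⟩ := exists_nat_gt (dist x q / ℓ)
  have hthx : dist x q < ((n₀:ℤ):ℝ) * ℓ := by
    rw [div_lt_iff₀ hpos] at hn₀; push_cast; linarith
  have hN0 : (0:ℤ) ≤ (n₀:ℤ) := by positivity
  set A := (m ^ (-(n₀:ℤ))) • q with hA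
  set B := (m ^ ((n₀:ℤ))) • q with hB
  have hAmem : A ∈ axisSet T m := line_mem hT hiso hax hpos _
  have hBmem : B ∈ axisSet T m := line_mem hT hiso hax hpos _
  have hAB : dist A B = 2 * (n₀:ℝ) * ℓ := by
    rw [hA, hB, line_dist hT hiso hax]
    rw [show ((n₀:ℤ):ℝ) - ((-(n₀:ℤ) : ℤ):ℝ) = 2 * ((n₀:ℕ):ℝ) by push_cast; ring]
    rw [abs_of_nonneg (by positivity)]
  have h2x := (disp hT hiso hax hpos x).2 (n₀:ℤ) hN0 hthx
  obtain ⟨p, hp1, hp2, hp3⟩ := exists_median hT x A B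
  -- p is between A and B
  have hpbtw : dist A p + dist p B = dist A B := by
    have c1 : dist p B = dist B p := dist_comm _ _
    have c2 : dist A x = dist x A := dist_comm _ _
    have c3 : dist B x = dist x B := dist_comm _ _
    have c4 : dist B A = dist A B := dist_comm _ _
    rw [c1, hp2, hp3]; simp only [gr]; linarith
  have hpmem : p ∈ axisSet T m := convex_axis hT hiso hax hpos hAmem hBmem hpbtw
  -- dist x p = (dist x (m•x) - ℓ)/2
  have hxp : dist x p = (dist x (m • x) - ℓ) / 2 := by
    rw [hp1]; simp only [gr]
    push_cast at h2x
    rw [hAB]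
    push_cast
    linarith
  refine ⟨p, hpmem, fun a ha => ?_⟩
  obtain ⟨w, hw1, hw2, hw3⟩ := exists_median hT x p a
  have hwbtw : dist p w + dist w a = dist p a := by
    have c1 : dist w a = dist a w := dist_comm _ _
    have c2 : dist p x = dist x p := dist_comm _ _
    have c3 : dist a x = dist x a := dist_comm _ _
    have c4 : dist a p = dist p a := dist_comm _ _
    rw [c1, hw2, hw3]; simp only [gr]; linarith
  have hwmem : w ∈ axisSet T m := convex_axis hT hiso hax hpos hpmem ha hwbtw
  have hwlow := axis_dist_lower hT hiso hax hpos x hwmem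
  have hxw : dist x w + dist w p = dist x p := by
    have c2 : dist p x = dist x p := dist_comm _ _
    have c3 : dist a x = dist x a := dist_comm _ _
    have c5 : dist w p = dist p w := dist_comm _ _
    rw [hw1, c5, hw2]; simp only [gr]; linarith
  have hwp0 : dist w p = 0 := by
    rw [hxp] at hxw
    have := dist_nonneg (x := w) (y := p)
    linarith [hwlow, hxw]
  have hwp : w = p := by rwa [dist_eq_zero] at hwp0
  have hsum : dist x w + dist w a = dist x a := by
    have c3 : dist a x = dist x a := dist_comm _ _
    have c6 : dist w a = dist a w := dist_comm _ _
    have c4 : dist a p = dist p a := dist_comm _ _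
    rw [hw1, c6, hw3]; simp only [gr]; linarith
  rw [hwp] at hsum
  exact hsum

/-- Product of two hyperbolic isometries with disjoint axes is hyperbolic. -/
theorem product_hyperbolic (hT : IsRTree T) (hiso : ∀ m : M, Isometry (fun x : T => m • x))
    {g h : M} (hg : 0 < translationLength T g) (hh : 0 < translationLength T h)
    (hdisj : Disjoint (axisSet T g) (axisSet T h)) :
    0 < translationLength T (g * h) := by
  obtain ⟨q₁, hax₁, hpos₁⟩ := exists_axial hT hiso hg
  obtain ⟨q₂, hax₂, hpos₂⟩ := exists_axial hT hiso hh
  -- gate of q₁ on the axis of h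
  obtain ⟨Q, hQmem, hQgate⟩ := gate_exists hT hiso hax₂ hpos₂ q₁
  -- gate of Q on the axis of g
  obtain ⟨P, hPmem, hPgate⟩ := gate_exists hT hiso hax₁ hpos₁ Q
  -- gate of P on the axis of h is Q again
  obtain ⟨Q', hQ'mem, hQ'gate⟩ := gate_exists hT hiso hax₂ hpos₂ P
  have hq₁mem : q₁ ∈ axisSet T g := q_mem_axis hT hiso hax₁ hpos₁
  have hQQ' : Q' = Q := by
    have e1 : dist q₁ Q + dist Q Q' = dist q₁ Q' := hQgate Q' hQ'mem
    have e2 : dist Q P + dist P q₁ = dist Q q₁ := hPgate q₁ hq₁mem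
    have e3 : dist P Q' + dist Q' Q = dist P Q := hQ'gate Q hQmem
    have t1 : dist q₁ Q' ≤ dist q₁ P + dist P Q' := dist_triangle _ _ _
    have c1 : dist q₁ P = dist P q₁ := dist_comm _ _
    have c2 : dist q₁ Q = dist Q q₁ := dist_comm _ _
    have c3 : dist Q P = dist P Q := dist_comm _ _
    have c4 : dist Q Q' = dist Q' Q := dist_comm _ _
    exact dist_eq_zero.1 (by linarith [dist_nonneg (x := Q') (y := Q)])
  rw [hQQ'] at hQ'gate
  clear hQ'mem hQQ' hQgate
  -- notation
  have hPdisp : dist P (g • P) = translationLength T g := hPmem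
  have hQdisp : dist Q (h • Q) = translationLength T h := hQmem
  have hΔpos : 0 < dist Q P := by
    rcases (dist_nonneg (x := Q) (y := P)).lt_or_eq with hlt | heq
    · exact hlt
    · exfalso
      have hQP : Q = P := dist_eq_zero.1 heq.symm
      exact Set.disjoint_left.1 hdisj (hQP ▸ hPmem) hQmem
  have cPQ : dist P Q = dist Q P := dist_comm _ _
  -- the pivot Gromov products
  have grP_gP : gr P Q (g • P) = 0 := by
    have e := hPgate (g • P) (axis_smul_mem hiso hPmem)
    simp only [gr]; linarith
  have grP_invgP : gr P Q (g⁻¹ • P) = 0 := by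
    have e := hPgate (g⁻¹ • P) (axis_inv_smul_mem hiso hPmem)
    simp only [gr]; linarith
  have grgP : gr (g • P) P (g • Q) = 0 := by
    have e := grS hiso g P (g⁻¹ • P) Q
    rw [smul_inv_smul] at e
    rw [e, gr_comm]
    exact grP_invgP
  have grQ_P_hQ : gr Q P (h • Q) = 0 := by
    have e := hQ'gate (h • Q) (axis_smul_mem hiso hQmem)
    simp only [gr]; linarith
  have grQ_P_invhQ : gr Q P (h⁻¹ • Q) = 0 := by
    have e := hQ'gate (h⁻¹ • Q) (axis_inv_smul_mem hiso hQmem)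
    simp only [gr]; linarith
  have grgQ : gr (g • Q) (g • P) (g • (h • Q)) = 0 := by
    rw [grS hiso]
    exact grQ_P_hQ
  -- chain 1
  have c1 : dist Q P + dist P (g • P) = dist Q (g • P) :=
    hPgate (g • P) (axis_smul_mem hiso hPmem)
  have c2 : dist Q (g • P) + dist (g • P) (g • Q) = dist Q (g • Q) :=
    btw_extend hT c1 grgP (by rw [hPdisp]; exact hg)
  have c3 : dist Q (g • Q) + dist (g • Q) (g • (h • Q)) = dist Q (g • (h • Q)) :=
    btw_extend hT c2 grgQ (by rw [dS hiso g P Q, cPQ]; exact hΔpos)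
  have vgPgQ : dist (g • P) (g • Q) = dist Q P := by rw [dS hiso, cPQ]
  have vgQghQ : dist (g • Q) (g • (h • Q)) = translationLength T h := by
    rw [dS hiso]; exact hQdisp
  have hL : dist Q (g • (h • Q)) =
      translationLength T g + translationLength T h + 2 * dist Q P := by
    rw [← c3, ← c2, ← c1, hPdisp, vgPgQ, vgQghQ]; ring
  -- chain 2
  have d01 : dist (h⁻¹ • (g⁻¹ • Q)) (h⁻¹ • Q) = dist Q (g • Q) := by
    rw [dS hiso, dist_comm, disp_inv hiso]
  have d12 : dist (h⁻¹ • Q) Q = translationLength T h := by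
    rw [dist_comm, disp_inv hiso]; exact hQdisp
  have dcross : dist (g⁻¹ • Q) (h • Q) = dist Q (g • (h • Q)) := by
    rw [← dS hiso g (g⁻¹ • Q) (h • Q), smul_inv_smul]
  have vQgQ : dist Q (g • Q) = translationLength T g + 2 * dist Q P := by
    rw [← c2, ← c1, hPdisp, vgPgQ]; ring
  have b0 : dist (h⁻¹ • (g⁻¹ • Q)) (h⁻¹ • Q) + dist (h⁻¹ • Q) Q =
      dist (h⁻¹ • (g⁻¹ • Q)) Q := by
    have e := grS hiso h (h⁻¹ • Q) (h⁻¹ • (g⁻¹ • Q)) Q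
    rw [smul_inv_smul, smul_inv_smul] at e
    have e0 : gr Q (g⁻¹ • Q) (h • Q) = 0 := by
      have vinv : dist Q (g⁻¹ • Q) = dist Q (g • Q) := disp_inv hiso g Q
      simp only [gr]
      rw [vinv, vQgQ, hQdisp, dcross, hL]; ring
    rw [e0] at e
    simp only [gr] at e
    have cc : dist (h⁻¹ • Q) (h⁻¹ • (g⁻¹ • Q)) = dist (h⁻¹ • (g⁻¹ • Q)) (h⁻¹ • Q) :=
      dist_comm _ _
    linarith
  have b1 : dist (h⁻¹ • (g⁻¹ • Q)) Q + dist Q P = dist (h⁻¹ • (g⁻¹ • Q)) P :=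
    btw_extend hT b0 (by rw [gr_comm]; exact grQ_P_invhQ) (by rw [d12]; exact hh)
  have b2 : dist (h⁻¹ • (g⁻¹ • Q)) P + dist P (g • P) = dist (h⁻¹ • (g⁻¹ • Q)) (g • P) :=
    btw_extend hT b1 grP_gP hΔpos
  have b3 : dist (h⁻¹ • (g⁻¹ • Q)) (g • P) + dist (g • P) (g • Q) =
      dist (h⁻¹ • (g⁻¹ • Q)) (g • Q) :=
    btw_extend hT b2 grgP (by rw [hPdisp]; exact hg)
  have b4 : dist (h⁻¹ • (g⁻¹ • Q)) (g • Q) + dist (g • Q) (g • (h • Q)) =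
      dist (h⁻¹ • (g⁻¹ • Q)) (g • (h • Q)) :=
    btw_extend hT b3 grgQ (by rw [vgPgQ]; exact hΔpos)
  have hlong : dist (h⁻¹ • (g⁻¹ • Q)) (g • (h • Q)) = 2 * dist Q (g • (h • Q)) := by
    rw [← b4, ← b3, ← b2, ← b1, ← b0, d01, d12, vQgQ, hPdisp, vgPgQ, vgQghQ, hL]
    ring
  -- conclude: Q is axial for g * h
  have hY0 : (g * h)⁻¹ • Q = h⁻¹ • (g⁻¹ • Q) := by rw [mul_inv_rev, mul_smul]
  have hGH : (g * h) • Q = g • (h • Q) := mul_smul _ _ _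
  have hdQ : dist Q ((g * h)⁻¹ • Q) = dist Q (g • (h • Q)) := by
    rw [disp_inv hiso (g * h) Q, hGH]
  have haxQ : gr Q ((g * h)⁻¹ • Q) ((g * h) • Q) = 0 := by
    simp only [gr]
    rw [hdQ, hGH, hY0, hlong]
    ring
  have hposQ : 0 < dist Q ((g * h) • Q) := by
    rw [hGH, hL]
    linarith
  rw [tl_eq hT hiso haxQ hposQ, hGH, hL]
  linarith
end RTreeAct

open RTreeAux RTreeAux2 RTreeAct in
/-- If `M = G ⋊ ℤ` (with `G` normal and stable letter `t`) acts on an ℝ-tree and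
`t^a·u`, `t^b·v` (with `u, v ∈ G`, `a, b ≠ 0`) are hyperbolic with disjoint axes,
then `(t^a·u)^b` and `(t^b·v)^{-a}` have disjoint axes and their product is a
hyperbolic element lying in `G`. -/
theorem hyperbolic_element_in_normal_subgroup {M T : Type*} [Group M] [MetricSpace T]
    [MulAction M T] (hT : IsRTree T) (hiso : ∀ m : M, Isometry (fun x : T => m • x))
    (G : Subgroup M) (hGn : G.Normal) (t u v : M) (hu : u ∈ G) (hv : v ∈ G)
    (a b : ℤ) (ha : a ≠ 0) (hb : b ≠ 0)
    (h1 : 0 < translationLength T (t ^ a * u)) (h2 : 0 < translationLength T (t ^ b * v))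
    (hdisj : Disjoint (axisSet T (t ^ a * u)) (axisSet T (t ^ b * v))) :
    Disjoint (axisSet T ((t ^ a * u) ^ b)) (axisSet T ((t ^ b * v) ^ (-a))) ∧
      (t ^ a * u) ^ b * (t ^ b * v) ^ (-a) ∈ G ∧
      0 < translationLength T ((t ^ a * u) ^ b * (t ^ b * v) ^ (-a)) := by
  obtain ⟨hgpos, hgax⟩ := tl_zpow hT hiso h1 b hb
  obtain ⟨hhpos, hhax⟩ := tl_zpow hT hiso h2 (-a) (neg_ne_zero.2 ha)
  refine ⟨?_, ?_, ?_⟩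
  · rw [hgax, hhax]; exact hdisj
  · haveI := hGn
    set φ : M →* M ⧸ G := QuotientGroup.mk' G with hφ
    have hu1 : φ u = 1 := (QuotientGroup.eq_one_iff u).2 hu
    have hv1 : φ v = 1 := (QuotientGroup.eq_one_iff v).2 hv
    have : φ ((t ^ a * u) ^ b * (t ^ b * v) ^ (-a)) = 1 := by
      rw [map_mul, map_zpow, map_zpow, map_mul, map_mul, map_zpow, map_zpow, hu1, hv1,
        mul_one, mul_one, ← zpow_mul, ← zpow_mul, ← zpow_add,
        show a * b + b * (-a) = 0 by ring, zpow_zero]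
    exact (QuotientGroup.eq_one_iff _).1 this
  · exact product_hyperbolic hT hiso hgpos hhpos (by rw [hgax, hhax]; exact hdisj)
end
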